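/- arXiv:1812.07604 — 6 statements merged into one kernel-verified Lean document; each statement's English description precedes it below -/
import Mathlib

section
/- For every natural number n > 2, the topological complexity of the finite model 𝕊¹_n of the circle with 2n points satisfies TC(𝕊¹_n) ≤ 3. -/
open Set

/-- `Q ⊆ X × X` admits a motion planner: a continuous map `s` from `Q` to the path
space `P(X) = C(I, X)` (with the compact-open topology) that is a section of the
endpoint map `π : C(I, X) → X × X`, `γ ↦ (γ 0, γ 1)`. -/
def AdmitsMotionPlanner {X : Type*} [TopologicalSpace X] (Q : Set (X × X)) : Prop :=
  ∃ s : C(Q, C(unitInterval, X)), ∀ q : Q, ((s q) 0, (s q) 1) = (q : X × X)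

/-- `X × X` is covered by `k` open sets, each admitting a motion planner. -/
def TCCover (X : Type*) [TopologicalSpace X] (k : ℕ) : Prop :=
  ∃ Q : Fin k → Set (X × X),
    (∀ i, IsOpen (Q i)) ∧ (⋃ i, Q i) = Set.univ ∧ ∀ i, AdmitsMotionPlanner (Q i)

/-- The (unreduced) topological complexity of `X`: the least `k` such that `X × X`
can be covered by `k` open sets, each admitting a motion planner. -/
noncomputable def topologicalComplexity (X : Type*) [TopologicalSpace X] : ℕ :=
  sInf {k | TCCover X k}
/-- The underlying set of the finite model `𝕊¹_n` of the circle (`2n` points):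
`Sum.inl i` is `x_i` and `Sum.inr i` is `y_i`. -/
def SCirc (n : ℕ) : Type := Fin n ⊕ Fin n

namespace SCirc

/-- The minimal point `x_i` of `𝕊¹_n`. -/
def x {n : ℕ} (i : Fin n) : SCirc n := Sum.inl i

/-- The maximal point `y_i` of `𝕊¹_n`. -/
def y {n : ℕ} (i : Fin n) : SCirc n := Sum.inr i

/-- The partial order on `𝕊¹_n` generated by `x_i < y_i` and `x_{(i-1) mod n} < y_i`. -/
def le {n : ℕ} : SCirc n → SCirc n → Prop
  | Sum.inl i, Sum.inl j => i = j
  | Sum.inr i, Sum.inr j => i = j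
  | Sum.inl i, Sum.inr j => i = j ∨ (i : ℕ) = ((j : ℕ) + n - 1) % n
  | Sum.inr _, Sum.inl _ => False

/-- The Alexandrov topology on `𝕊¹_n`: open sets are down-sets.  The minimal open
neighbourhoods are `x_i^↓ = {x_i}` and `y_i^↓ = {y_i, x_i, x_{(i-1) mod n}}`. -/
instance (n : ℕ) : TopologicalSpace (SCirc n) where
  IsOpen U := ∀ a ∈ U, ∀ b, SCirc.le b a → b ∈ U
  isOpen_univ := fun _ _ _ _ => trivial
  isOpen_inter := fun _ _ hU hV a ha b hba => ⟨hU a ha.1 b hba, hV a ha.2 b hba⟩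
  isOpen_sUnion := fun S hS a ha b hba => by
    obtain ⟨U, hUS, haU⟩ := ha
    exact ⟨U, hUS, hS U hUS a haU b hba⟩

end SCirc

/-!
Removing a maximal point `y j` from `𝕊¹_n` leaves the fence
`x j < y (j+1) > x (j+1) < ⋯ > y (j-1) > x (j-1)`, and its inclusion into `𝕊¹_n` is
nullhomotopic: in an Alexandrov space, maps that are pointwise comparable in the specialization
order are homotopic, and clamping the position along the fence at `t` and at `t + 1` gives
comparable maps, interpolating between the constant map at `x j` and the inclusion.
Hence the two projections of `(𝕊¹_n ∖ {y j})²` are homotopic, which is a motion planner on it.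
For `n ≥ 3` the open sets `(𝕊¹_n ∖ {y j})²`, `j = 0, 1, 2`, cover `𝕊¹_n × 𝕊¹_n`, because a
pair of points cannot contain three distinct points.
-/

open Function Topology

theorem Function.Injective.exists_ne_and_ne {ι α : Type*} [Fintype ι] {p : ι → α}
    (hp : Injective p) (hι : 2 < Fintype.card ι) (a b : α) : ∃ i, p i ≠ a ∧ p i ≠ b := by
  classical
  obtain ⟨_, hi, hab⟩ := Finset.exists_mem_notMem_of_card_lt_card
    (s := {a, b}) (t := Finset.univ.image p)
    (by rw [Finset.card_image_of_injective _ hp, Finset.card_univ]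
        exact Finset.card_le_two.trans_lt hι)
  obtain ⟨i, -, rfl⟩ := Finset.mem_image.1 hi
  exact ⟨i, by simpa [not_or] using hab⟩

theorem continuous_of_forall_specializes {X Y : Type*} [TopologicalSpace X] [TopologicalSpace Y]
    [AlexandrovDiscrete X] {f : X → Y} (hf : ∀ ⦃a b⦄, a ⤳ b → f a ⤳ f b) :
    Continuous f :=
  continuous_def.2 fun _ hs =>
    isOpen_iff_forall_specializes.2 fun _ _ hab hb => (hf hab).mem_open hs hb

namespace ContinuousMap

variable {X Y : Type*} [TopologicalSpace X] [TopologicalSpace Y]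

theorem homotopic_of_forall_specializes {f g : C(X, Y)} (h : ∀ a, f a ⤳ g a) :
    f.Homotopic g := by
  classical
  refine ⟨⟨⟨{p : unitInterval × X | p.1 = 1}.piecewise (g ∘ Prod.snd) (f ∘ Prod.snd),
    ?_⟩, fun a => ?_, fun a => ?_⟩⟩
  · exact (isClosed_eq continuous_fst continuous_const).continuous_piecewise_of_specializes
      (by fun_prop) (by fun_prop) fun p => h p.2
  · simp [Set.piecewise]
  · simp [Set.piecewise]

theorem Nullhomotopic.homotopic_comp {Z : Type*} [TopologicalSpace Z] {ι : C(Y, Z)}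
    (hι : ι.Nullhomotopic) (f g : C(X, Y)) : (ι.comp f).Homotopic (ι.comp g) := by
  obtain ⟨c, hc⟩ := hι
  have hf := hc.comp (.refl f)
  have hg := hc.comp (.refl g)
  rw [const_comp] at hf hg
  exact hf.trans hg.symm

end ContinuousMap

section MotionPlanner

variable {X : Type*} [TopologicalSpace X]

theorem admitsMotionPlanner_of_homotopic {Q : Set (X × X)}
    (h : (ContinuousMap.fst.restrict Q).Homotopic (ContinuousMap.snd.restrict Q)) :
    AdmitsMotionPlanner Q := by
  obtain ⟨H⟩ := h
  exact ⟨(H.toContinuousMap.comp .prodSwap).curry, fun q => by simp⟩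

theorem admitsMotionPlanner_of_subset_prod {S : Set X}
    (hS : ((ContinuousMap.id X).restrict S).Nullhomotopic) {Q : Set (X × X)}
    (hQ : Q ⊆ S ×ˢ S) : AdmitsMotionPlanner Q :=
  admitsMotionPlanner_of_homotopic <| hS.homotopic_comp
    (⟨fun q => ⟨q.1.1, (hQ q.2).1⟩, by fun_prop⟩ : C(Q, S))
    (⟨fun q => ⟨q.1.2, (hQ q.2).2⟩, by fun_prop⟩ : C(Q, S))

theorem tcCover_of_nullhomotopic_compl {k : ℕ} (hk : 2 < k) {z : Fin k → X}
    (hz : Injective z) (hz_closed : ∀ i, IsClosed {z i})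
    (hnull : ∀ i, ((ContinuousMap.id X).restrict {z i}ᶜ).Nullhomotopic) : TCCover X k := by
  refine ⟨fun i => {z i}ᶜ ×ˢ {z i}ᶜ, fun i => (hz_closed i).isOpen_compl.prod
    (hz_closed i).isOpen_compl, ?_, fun i => admitsMotionPlanner_of_subset_prod (hnull i) .rfl⟩
  refine Set.eq_univ_of_forall fun p => Set.mem_iUnion.2 ?_
  obtain ⟨i, h1, h2⟩ := hz.exists_ne_and_ne (by simpa using hk) p.1 p.2
  exact ⟨i, Ne.symm h1, Ne.symm h2⟩

end MotionPlanner

theorem Fin.val_add_one_of_ne_zero {n : ℕ} [NeZero n] {c : Fin n} (hc : c + 1 ≠ 0) :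
    (c + 1).val = c.val + 1 := by
  refine val_add_one_of_lt' (not_le.1 fun h => hc ?_)
  rw [Fin.ext_iff, val_add, val_one', Nat.add_mod_mod,
    show c.val + 1 = n by have := c.isLt; omega, Nat.mod_self, val_zero]

open Fin.CommRing in
theorem Fin.one_le_val_sub_of_ne {n : ℕ} [NeZero n] {i j : Fin n} (hij : i ≠ j) :
    1 ≤ (i - j).val :=
  val_pos_iff.2 (pos_iff_ne_zero.2 (sub_ne_zero.2 hij))

namespace SCirc

variable {n : ℕ}

theorem le.refl (a : SCirc n) : le a a := by
  cases a <;> simp [le]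

theorem le.trans {a b c : SCirc n} (hab : le a b) (hbc : le b c) : le a c := by
  cases a <;> cases b <;> cases c <;> simp_all [le]

theorem specializes_iff_le {a b : SCirc n} : a ⤳ b ↔ le a b :=
  ⟨fun h => h.mem_open (fun _ hc _ hdc => hdc.trans hc) (le.refl b),
    fun h => specializes_iff_forall_open.2 fun _ hs hb => hs b hb a h⟩

instance : AlexandrovDiscrete (SCirc n) :=
  ⟨fun _ hS _ ha b hba s hs => hS s hs _ (ha s hs) b hba⟩

theorem y_injective : Injective (y : Fin n → SCirc n) := Sum.inr_injective

theorem eq_of_y_le {i : Fin n} {a : SCirc n} (h : le (y i) a) : a = y i := by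
  cases a with
  | inl _ => exact h.elim
  | inr _ => exact congrArg Sum.inr (Eq.symm h)

theorem isClosed_singleton_y (j : Fin n) : IsClosed {y j} :=
  isOpen_compl_iff.1 fun _ ha _ hba hb => ha (eq_of_y_le (hb ▸ hba))

open Fin.CommRing

def zigzagIndex (j : Fin n) : SCirc n → ℕ
  | Sum.inl i => 2 * (i - j).val
  | Sum.inr i => 2 * (i - j).val - 1

theorem zigzagIndex_lt (j : Fin n) (a : SCirc n) : zigzagIndex j a < 2 * n := by
  cases a with
  | inl i => have := (i - j).isLt; simp only [zigzagIndex]; omega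
  | inr i => have := (i - j).isLt; simp only [zigzagIndex]; omega

section

variable [NeZero n]

theorem x_le_y {i j : Fin n} : le (x i) (y j) ↔ i = j ∨ i + 1 = j := by
  have hj : (j - 1 : Fin n) = ((j + n - 1 : ℕ) : Fin n) := by
    rw [Nat.cast_sub (by have := NeZero.pos n; omega), Nat.cast_add, Fin.natCast_self,
      Fin.cast_val_eq_self, Nat.cast_one, add_zero]
  change i = j ∨ (i : ℕ) = ((j : ℕ) + n - 1) % n ↔ _
  rw [← Fin.val_natCast, ← Fin.ext_iff, ← hj, eq_sub_iff_add_eq]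

variable (j : Fin n)

/-- `zigzag j` enumerates `𝕊¹_n ∖ {y j}` as `x j < y (j+1) > x (j+1) < ⋯ > x (j-1)`;
`zigzagIndex j` inverts it there. -/
def zigzag (u : ℕ) : SCirc n :=
  if Even u then x (j + (u / 2 : ℕ)) else y (j + ((u + 1) / 2 : ℕ))

theorem zigzag_two_mul (s : ℕ) : zigzag j (2 * s) = x (j + (s : Fin n)) := by
  simp [zigzag]

theorem zigzag_two_mul_add_one (s : ℕ) :
    zigzag j (2 * s + 1) = y (j + ((s + 1 : ℕ) : Fin n)) := by
  simp [zigzag, show (2 * s + 1 + 1) / 2 = s + 1 by omega]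

theorem zigzag_le_zigzag {u v : ℕ} (hv : Odd v) (huv : u ≤ v + 1) (hvu : v ≤ u + 1) :
    le (zigzag j u) (zigzag j v) := by
  obtain ⟨s, rfl⟩ := hv
  obtain rfl | rfl | rfl : u = 2 * s ∨ u = 2 * s + 1 ∨ u = 2 * s + 2 := by omega
  · rw [zigzag_two_mul, zigzag_two_mul_add_one, x_le_y]
    exact .inr (by push_cast; ring)
  · exact le.refl _
  · rw [show 2 * s + 2 = 2 * (s + 1) by ring, zigzag_two_mul, zigzag_two_mul_add_one, x_le_y]
    exact .inl rfl

theorem zigzag_min_le_zigzag_min {u v : ℕ} (hv : Odd v) (huv : u ≤ v + 1) (hvu : v ≤ u + 1)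
    (t : ℕ) : le (zigzag j (min u t)) (zigzag j (min v t)) := by
  by_cases ht : v ≤ t
  · exact zigzag_le_zigzag j (by rwa [min_eq_left ht]) (by omega) (by omega)
  · rw [show min u t = min v t by omega]
    exact le.refl _

theorem zigzag_min_le_or_ge_succ (t : ℕ) :
    (∀ p, le (zigzag j (min p t)) (zigzag j (min p (t + 1)))) ∨
      ∀ p, le (zigzag j (min p (t + 1))) (zigzag j (min p t)) := by
  rcases Nat.even_or_odd t with ht | ht
  · exact .inl fun p => by
      simpa only [min_comm p] using zigzag_min_le_zigzag_min j ht.add_one (by omega) le_rfl p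
  · exact .inr fun p => by
      simpa only [min_comm p] using zigzag_min_le_zigzag_min j ht le_rfl (by omega) p

theorem zigzag_zigzagIndex {a : SCirc n} (ha : a ≠ y j) : zigzag j (zigzagIndex j a) = a := by
  cases a with
  | inl i =>
    change zigzag j (2 * (i - j).val) = x i
    rw [zigzag_two_mul, Fin.cast_val_eq_self, add_sub_cancel]
  | inr i =>
    obtain ⟨k, hk⟩ :=
      Nat.exists_eq_add_of_le' (Fin.one_le_val_sub_of_ne fun h => ha (congrArg y h))
    change zigzag j (2 * (i - j).val - 1) = y i
    rw [hk, show 2 * (k + 1) - 1 = 2 * k + 1 by omega, zigzag_two_mul_add_one, ← hk,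
      Fin.cast_val_eq_self, add_sub_cancel]

theorem zigzagIndex_adjacent_of_le {a b : SCirc n} (hab : le a b) (hb : b ≠ y j) :
    a = b ∨ Odd (zigzagIndex j b) ∧ zigzagIndex j a ≤ zigzagIndex j b + 1 ∧
      zigzagIndex j b ≤ zigzagIndex j a + 1 := by
  cases a with
  | inl i =>
    cases b with
    | inl i' => exact .inl (congrArg Sum.inl hab)
    | inr i' =>
      have hi'j : i' ≠ j := fun h => hb (congrArg y h)
      have hk := Fin.one_le_val_sub_of_ne hi'j
      right
      rcases x_le_y.1 hab with rfl | rfl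
      · simp only [zigzagIndex]
        refine ⟨⟨(i - j).val - 1, by omega⟩, by omega, by omega⟩
      · have hval : (i + 1 - j).val = (i - j).val + 1 := by
          rw [add_sub_right_comm, Fin.val_add_one_of_ne_zero]
          rwa [← add_sub_right_comm, sub_ne_zero]
        simp only [zigzagIndex, hval]
        refine ⟨⟨(i - j).val, by omega⟩, by omega, by omega⟩
  | inr i =>
    cases b with
    | inl i' => exact hab.elim
    | inr i' => exact .inl (congrArg Sum.inr hab)

def zigzagClamp (t : ℕ) : C(({y j}ᶜ : Set (SCirc n)), SCirc n) where
  toFun a := zigzag j (min (zigzagIndex j a) t)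
  continuous_toFun := continuous_of_forall_specializes fun a b hab => by
    rw [subtype_specializes_iff, specializes_iff_le] at hab
    rw [specializes_iff_le]
    rcases zigzagIndex_adjacent_of_le j hab b.2 with h | ⟨hodd, h1, h2⟩
    · rw [h]
      exact le.refl _
    · exact zigzag_min_le_zigzag_min j hodd h1 h2 t

theorem zigzagClamp_zero : zigzagClamp j 0 = .const _ (x j) := by
  ext a
  simpa [zigzagClamp] using zigzag_two_mul j 0

theorem zigzagClamp_two_mul :
    zigzagClamp j (2 * n) = (ContinuousMap.id _).restrict {y j}ᶜ := by
  ext a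
  exact congrArg _ (min_eq_left (zigzagIndex_lt j a).le) |>.trans (zigzag_zigzagIndex j a.2)

theorem zigzagClamp_homotopic_succ (t : ℕ) :
    (zigzagClamp j t).Homotopic (zigzagClamp j (t + 1)) := by
  rcases zigzag_min_le_or_ge_succ j t with h | h
  · exact ContinuousMap.homotopic_of_forall_specializes fun a => specializes_iff_le.2 (h _)
  · exact (ContinuousMap.homotopic_of_forall_specializes fun a => specializes_iff_le.2 (h _)).symm

theorem nullhomotopic_compl_y :
    ((ContinuousMap.id (SCirc n)).restrict {y j}ᶜ).Nullhomotopic := by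
  have hchain : ∀ t, (zigzagClamp j 0).Homotopic (zigzagClamp j t) := fun t => by
    induction t with
    | zero => exact .refl _
    | succ t ih => exact ih.trans (zigzagClamp_homotopic_succ j t)
  refine ⟨x j, ?_⟩
  rw [← zigzagClamp_two_mul, ← zigzagClamp_zero]
  exact (hchain _).symm

end

end SCirc

/-- For every natural number `n > 2`, the topological complexity of
the finite model `𝕊¹_n` of the circle with `2n` points satisfies `TC(𝕊¹_n) ≤ 3`. -/
theorem tc_scirc_le_three (n : ℕ) (hn : 2 < n) :
    topologicalComplexity (SCirc n) ≤ 3 := by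
  have : NeZero n := ⟨by omega⟩
  exact Nat.sInf_le <| tcCover_of_nullhomotopic_compl (by norm_num)
    (SCirc.y_injective.comp (Fin.castLE_injective hn)) (fun _ => SCirc.isClosed_singleton_y _)
    (fun _ => SCirc.nullhomotopic_compl_y _)
end

section
/- Let X be a path-connected topological space, x₀ ∈ X, and Q ⊆ X × X a subset that contains X × {x₀} and admits a motion planner. Then the map ι : X → X × X sending x to (x, x₀) is homotopic to the diagonal map Δ : X → X × X sending x to (x, x). -/
open Set

/-!
Restricting the motion planner to the slice `X × {x₀}` gives, continuously in `x`, a path from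
`x` to `x₀`: a contraction of `X` onto `x₀`. Pairing the identity of `X` with this contraction
deforms `x ↦ (x, x₀)` into the diagonal.
-/

section

variable {X Y : Type*} [TopologicalSpace X] [TopologicalSpace Y]

theorem ContinuousMap.Homotopic.of_pathFamily {f₀ f₁ : C(Y, X)} (Γ : C(Y, C(unitInterval, X)))
    (h₀ : ∀ y, Γ y 0 = f₀ y) (h₁ : ∀ y, Γ y 1 = f₁ y) : f₀.Homotopic f₁ :=
  ⟨{ toContinuousMap := Γ.uncurry.comp .prodSwap
     map_zero_left := h₀
     map_one_left := h₁ }⟩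

theorem AdmitsMotionPlanner.homotopic_fst_snd {Q : Set (X × X)} (hplan : AdmitsMotionPlanner Q)
    (f : C(Y, X × X)) (hf : ∀ y, f y ∈ Q) :
    (ContinuousMap.fst.comp f).Homotopic (ContinuousMap.snd.comp f) := by
  obtain ⟨s, hs⟩ := hplan
  let g : C(Y, Q) := ⟨Set.codRestrict f Q hf, f.continuous.codRestrict hf⟩
  exact .of_pathFamily (s.comp g) (fun y => congrArg Prod.fst (hs (g y)))
    (fun y => congrArg Prod.snd (hs (g y)))

end

/-- Let `X` be a path-connected topological space, `x₀ ∈ X`, and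
`Q ⊆ X × X` a subset that contains `X × {x₀}` and admits a motion planner.  Then the
map `ι : X → X × X`, `x ↦ (x, x₀)`, is homotopic to the diagonal `Δ : X → X × X`,
`x ↦ (x, x)`. -/
theorem planner_slice_homotopic_diag
    (X : Type*) [TopologicalSpace X] (x₀ : X)
    (Q : Set (X × X)) (hQ : Set.univ ×ˢ ({x₀} : Set X) ⊆ Q)
    (hplan : AdmitsMotionPlanner Q) :
    ContinuousMap.Homotopic
      (⟨fun x => (x, x₀), by continuity⟩ : C(X, X × X))
      (⟨fun x => (x, x), by continuity⟩ : C(X, X × X)) := by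
  have hcontract : (ContinuousMap.id X).Homotopic (.const X x₀) :=
    hplan.homotopic_fst_snd ⟨fun x => (x, x₀), by fun_prop⟩ fun _ => hQ ⟨trivial, rfl⟩
  exact (ContinuousMap.Homotopic.refl (.id X)).prodMk hcontract.symm
end

section
/- For every n ≥ 1, the topological complexity of the minimal finite model 𝕊ⁿ of the n-sphere equals 4: TC(𝕊ⁿ) = 4. -/
open Set

/-- The non-Hausdorff join `X ⊛ Y` of two (finite, Alexandrov) spaces: the disjoint
union `X ⊕ Y` with each factor keeping its topology (order), and `x < y` for every
`x ∈ X`, `y ∈ Y`.  The open sets (down-sets) are those whose two parts are open and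
which contain all of `X` whenever they meet `Y`. -/
def NHJoinTop (X Y : Type*) [TopologicalSpace X] [TopologicalSpace Y] :
    TopologicalSpace (X ⊕ Y) where
  IsOpen U := IsOpen (Sum.inl ⁻¹' U) ∧ IsOpen (Sum.inr ⁻¹' U) ∧
    ((∃ y, Sum.inr y ∈ U) → ∀ x, Sum.inl x ∈ U)
  isOpen_univ := ⟨isOpen_univ, isOpen_univ, fun _ _ => trivial⟩
  isOpen_inter := fun U V hU hV =>
    ⟨hU.1.inter hV.1, hU.2.1.inter hV.2.1,
      fun ⟨y, hy⟩ x => ⟨hU.2.2 ⟨y, hy.1⟩ x, hV.2.2 ⟨y, hy.2⟩ x⟩⟩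
  isOpen_sUnion := fun S hS => by
    refine ⟨?_, ?_, ?_⟩
    · rw [Set.preimage_sUnion]
      exact isOpen_biUnion fun t ht => (hS t ht).1
    · rw [Set.preimage_sUnion]
      exact isOpen_biUnion fun t ht => (hS t ht).2.1
    · rintro ⟨y, U, hUS, hyU⟩ x
      exact ⟨U, hUS, (hS U hUS).2.2 ⟨y, hyU⟩ x⟩

/-- The underlying set of the minimal finite model `𝕊ⁿ` of the `n`-sphere
(`2n + 2` points): `𝕊⁰` is the two-point discrete space and `𝕊ⁿ = 𝕊ⁿ⁻¹ ⊛ 𝕊⁰`. -/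
def SpherePt : ℕ → Type
  | 0 => Bool
  | n + 1 => SpherePt n ⊕ Bool

/-- The topology of the minimal finite model `𝕊ⁿ`: discrete for `n = 0`, and the
non-Hausdorff join (suspension) topology `𝕊ⁿ⁻¹ ⊛ 𝕊⁰` for `n ≥ 1`. -/
def sphereTop : (n : ℕ) → TopologicalSpace (SpherePt n)
  | 0 => ⊥
  | n + 1 => @NHJoinTop (SpherePt n) Bool (sphereTop n) inferInstance


/-!
In the specialization order of `𝕊ⁿ` a point lies below exactly the points of strictly higher
level, with two points on each level `0, …, n`.

Upper bound: every point lies below one of the two maximal points `a₀, a₁`, and a minimal point `m`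
lies below both, so on each of the four open sets `↓aᵢ × ↓aⱼ` the zigzag `x ⤳ aᵢ ⤺ m ⤳ aⱼ ⤺ y`
is a motion planner.

Lower bound: an open set containing two of the four pairs `(aᵢ, aⱼ)`, say with different first
coordinates, contains `𝕊ⁿ × {m}`, so a motion planner on it would be a homotopy from the identity
to a constant map. But `𝕊ⁿ` has no beat points, so (Stong) no map other than the identity is
comparable to it in the finite space `C(𝕊ⁿ, 𝕊ⁿ)`, and the identity is alone in its path component.
-/

open unitInterval

section

variable {X : Type*} [TopologicalSpace X]

noncomputable def Specializes.path {x y : X} (h : x ⤳ y) : Path x y where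
  toFun t := if t = 1 then y else x
  continuous_toFun :=
    isClosed_singleton.continuous_piecewise_of_specializes continuous_const continuous_const
      fun _ ↦ h
  source' := if_neg zero_ne_one
  target' := if_pos rfl

theorem Specializes.continuous_uncurry_path {ι : Type*} [TopologicalSpace ι] {x : ι → X} {y : X}
    (hx : Continuous x) (h : ∀ i, x i ⤳ y) : Continuous ↿fun i ↦ (h i).path := by
  classical
  have hs : IsClosed (Prod.snd ⁻¹' {1} : Set (ι × I)) := isClosed_singleton.preimage continuous_snd
  convert hs.continuous_piecewise_of_specializes continuous_const (hx.comp continuous_fst)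
    fun p ↦ h p.1 using 1
  funext p
  exact if_congr Iff.rfl rfl rfl

theorem isClopen_singleton_of_specializes [AlexandrovDiscrete X] {x : X}
    (h : ∀ y, y ⤳ x ∨ x ⤳ y → y = x) : IsClopen {x} := by
  refine ⟨?_, ?_⟩
  · refine isOpen_compl_iff.1 (isOpen_iff_forall_specializes.2 fun y z hyz hz hy ↦ hz ?_)
    exact h z (Or.inr (hy ▸ hyz))
  · exact isOpen_iff_forall_specializes.2 fun y z hyz hz ↦ h y (Or.inl (hz ▸ hyz))

theorem ContinuousMap.Homotopic.eq_of_isClopen_singleton {Y : Type*} [TopologicalSpace Y]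
    {f g : C(X, Y)} (h : f.Homotopic g) (hg : IsClopen {g}) : f = g := by
  obtain ⟨F⟩ := h
  have hjoin : Joined g f := ⟨(⟨F.curry, F.curry_zero, F.curry_one⟩ : Path f g).symm⟩
  exact hg.connectedComponent_subset rfl (pathComponent_subset_component g hjoin)

theorem admitsMotionPlanner_of_path {Q : Set (X × X)}
    (γ : ∀ q : Q, Path (q : X × X).1 (q : X × X).2) (hγ : Continuous ↿γ) :
    AdmitsMotionPlanner Q :=
  ⟨ContinuousMap.curry ⟨↿γ, hγ⟩, fun q ↦ Prod.ext (γ q).source (γ q).target⟩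

theorem admitsMotionPlanner_nhdsKer_prod {a b m : X} (ha : m ⤳ a) (hb : m ⤳ b) :
    AdmitsMotionPlanner (nhdsKer {a} ×ˢ nhdsKer {b}) := by
  have hx (q : ↥(nhdsKer {a} ×ˢ nhdsKer {b})) : (q : X × X).1 ⤳ a :=
    mem_nhdsKer_singleton.1 q.2.1
  have hy (q : ↥(nhdsKer {a} ×ˢ nhdsKer {b})) : (q : X × X).2 ⤳ b :=
    mem_nhdsKer_singleton.1 q.2.2
  refine admitsMotionPlanner_of_path
    (fun q ↦ (((hx q).path.trans ha.path.symm).trans hb.path).trans (hy q).path.symm) ?_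
  refine Path.trans_continuous_family _ (Path.trans_continuous_family _
    (Path.trans_continuous_family _ ?_ _ ?_) _ ?_) _ (Path.symm_continuous_family _ ?_)
  · exact Specializes.continuous_uncurry_path (by fun_prop) hx
  · exact ha.path.symm.continuous.comp continuous_snd
  · exact hb.path.continuous.comp continuous_snd
  · exact Specializes.continuous_uncurry_path (by fun_prop) hy

theorem AdmitsMotionPlanner.homotopic {Z : Type*} [TopologicalSpace Z] {Q : Set (X × X)}
    (hQ : AdmitsMotionPlanner Q) {f g : C(Z, X)} (hfg : ∀ z, (f z, g z) ∈ Q) :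
    f.Homotopic g := by
  obtain ⟨s, hs⟩ := hQ
  let φ : C(Z, C(I, X)) := s.comp ⟨fun z ↦ ⟨(f z, g z), hfg z⟩, by fun_prop⟩
  exact ⟨{ toContinuousMap := φ.uncurry.comp ContinuousMap.prodSwap
           map_zero_left z := congrArg Prod.fst (hs _)
           map_one_left z := congrArg Prod.snd (hs _) }⟩

theorem tcCover_of_fintype {ι : Type*} [Fintype ι] (Q : ι → Set (X × X))
    (hQ : ∀ i, IsOpen (Q i)) (hcov : ⋃ i, Q i = univ) (hplan : ∀ i, AdmitsMotionPlanner (Q i)) :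
    TCCover X (Fintype.card ι) := by
  let e := (Fintype.equivFin ι).symm
  refine ⟨Q ∘ e, fun i ↦ hQ (e i), ?_, fun i ↦ hplan (e i)⟩
  rw [← hcov]
  exact e.surjective.iUnion_comp Q

theorem tcCover_of_forall_specializes [AlexandrovDiscrete X] {ι : Type*} [Fintype ι]
    (a : ι → X) {m : X} (hm : ∀ i, m ⤳ a i) (hcov : ∀ x, ∃ i, x ⤳ a i) :
    TCCover X (Fintype.card ι ^ 2) := by
  rw [sq, ← Fintype.card_prod]
  refine tcCover_of_fintype (fun i : ι × ι ↦ nhdsKer {a i.1} ×ˢ nhdsKer {a i.2})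
    (fun _ ↦ isOpen_nhdsKer.prod isOpen_nhdsKer) ?_
    (fun i ↦ admitsMotionPlanner_nhdsKer_prod (hm i.1) (hm i.2))
  refine eq_univ_of_forall fun p ↦ mem_iUnion.2 ?_
  obtain ⟨i, hi⟩ := hcov p.1
  obtain ⟨j, hj⟩ := hcov p.2
  exact ⟨(i, j), mem_nhdsKer_singleton.2 hi, mem_nhdsKer_singleton.2 hj⟩

end

namespace SpherePt

instance (n : ℕ) : TopologicalSpace (SpherePt n) := sphereTop n

instance instFinite : ∀ n, Finite (SpherePt n)
  | 0 => inferInstanceAs (Finite Bool)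
  | n + 1 => have := instFinite n; inferInstanceAs (Finite (SpherePt n ⊕ Bool))

def level : {n : ℕ} → SpherePt n → ℕ
  | 0, _ => 0
  | _ + 1, .inl x => level x
  | n + 1, .inr _ => n + 1

theorem level_le : ∀ {n : ℕ} (x : SpherePt n), level x ≤ n
  | 0, _ => le_rfl
  | _ + 1, .inl x => (level_le x).trans (Nat.le_succ _)
  | _ + 1, .inr _ => le_rfl

theorem isOpen_iff {n : ℕ} {U : Set (SpherePt n)} :
    IsOpen U ↔ ∀ x ∈ U, ∀ y, level y < level x → y ∈ U := by
  induction n with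
  | zero =>
    exact iff_of_true (@isOpen_discrete _ ⊥ ⟨rfl⟩ U) fun _ _ _ h ↦ absurd h (Nat.not_lt_zero _)
  | succ n ih =>
    change (IsOpen (Sum.inl ⁻¹' U) ∧ IsOpen (Sum.inr ⁻¹' U) ∧ _) ↔ _
    rw [ih]
    simp only [isOpen_discrete, true_and]
    constructor
    · rintro ⟨hl, hmix⟩ (x | b) hx (y | c) hy
      · exact hl x hx y hy
      · exact absurd hy (Nat.not_lt.2 ((level_le x).trans (Nat.le_succ n)))
      · exact hmix ⟨b, hx⟩ y
      · exact absurd hy (lt_irrefl _)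
    · intro h
      exact ⟨fun x hx y hy ↦ h (.inl x) hx (.inl y) hy,
        fun ⟨b, hb⟩ x ↦ h (.inr b) hb (.inl x) (Nat.lt_succ_of_le (level_le x))⟩

theorem specializes_iff {n : ℕ} {x y : SpherePt n} : x ⤳ y ↔ x = y ∨ level x < level y := by
  refine ⟨fun h ↦ show x ∈ {z | z = y ∨ level z < level y} from
    h.mem_open (isOpen_iff.2 fun z hz w hw ↦ ?_) (Or.inl rfl), ?_⟩
  · exact Or.inr (hz.elim (· ▸ hw) hw.trans)
  · rintro (rfl | h)
    · rfl
    · exact specializes_iff_forall_open.2 fun U hU hy ↦ isOpen_iff.1 hU y hy x h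

def point : (n : ℕ) → ℕ → Bool → SpherePt n
  | 0, _, b => b
  | n + 1, k, b => if k ≤ n then .inl (point n k b) else .inr b

theorem level_point : ∀ {n k : ℕ} (b : Bool), k ≤ n → level (point n k b) = k
  | 0, _, _, hk => (Nat.le_zero.1 hk).symm
  | n + 1, k, b, hk => by
    by_cases hkn : k ≤ n
    · simpa [point, hkn, level] using level_point b hkn
    · simp only [point, hkn, ↓reduceIte, level]
      omega

theorem point_true_ne_false : ∀ {n : ℕ} (k : ℕ), point n k true ≠ point n k false
  | 0, _ => Bool.noConfusion
  | n + 1, k => by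
    by_cases hkn : k ≤ n
    · simp only [point, hkn, ↓reduceIte]
      exact fun h ↦ point_true_ne_false k (Sum.inl_injective h)
    · simp only [point, hkn, ↓reduceIte]
      exact fun h ↦ Bool.noConfusion (Sum.inr_injective h)

theorem exists_specializes_top : ∀ {n : ℕ} (x : SpherePt n), ∃ b, x ⤳ point n n b
  | 0, b => ⟨b, specializes_rfl⟩
  | n + 1, .inl x => ⟨true, specializes_iff.2 (Or.inr (by
      rw [level_point true le_rfl]; exact Nat.lt_succ_of_le (level_le x)))⟩
  | n + 1, .inr b => ⟨b, by
      simp only [point, Nat.not_succ_le_self, ↓reduceIte]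
      exact specializes_refl (X := SpherePt (n + 1)) _⟩

theorem point_zero_specializes_top {n : ℕ} (hn : 1 ≤ n) (b c : Bool) :
    point n 0 b ⤳ point n n c :=
  specializes_iff.2 (Or.inr (by rw [level_point b (Nat.zero_le n), level_point c le_rfl]; omega))

theorem eq_point_of_point_specializes {n k : ℕ} {b : Bool} {x : SpherePt n} (hk : k ≤ n)
    (h : point n k b ⤳ x) (hx : level x ≤ k) : x = point n k b :=
  ((specializes_iff.1 h).resolve_right (by rw [level_point b hk]; omega)).symm

theorem eq_point_of_specializes_point {n k : ℕ} {b : Bool} {x : SpherePt n} (hk : k ≤ n)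
    (h : x ⤳ point n k b) (hx : k ≤ level x) : x = point n k b :=
  (specializes_iff.1 h).resolve_right (by rw [level_point b hk]; omega)

-- `𝕊ⁿ` has no down beat points: a point of level `k + 1` lies above two points of level `k`.
theorem eq_id_of_specializes_id {n : ℕ} {ψ : C(SpherePt n, SpherePt n)}
    (h : ψ ⤳ ContinuousMap.id _) : ψ = ContinuousMap.id _ := by
  have hψ : ∀ x, ψ x ⤳ x := specializes_pi.1 (ContinuousMap.specializes_coe.2 h)
  suffices ∀ x, ψ x = x from ContinuousMap.ext this
  intro x
  induction hk : level x using Nat.strong_induction_on generalizing x with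
  | _ k ih =>
    refine (specializes_iff.1 (hψ x)).resolve_right fun hlt ↦ ?_
    obtain ⟨j, rfl⟩ : ∃ j, k = j + 1 := Nat.exists_eq_succ_of_ne_zero (by omega)
    have hj : j ≤ n := by have := level_le x; omega
    have hbelow (b : Bool) : ψ x = point n j b := by
      refine eq_point_of_point_specializes hj ?_ (by omega)
      rw [← ih j (by omega) (point n j b) (level_point b hj)]
      exact ψ.map_specializes (specializes_iff.2 (Or.inr (by rw [level_point b hj]; omega)))
    exact point_true_ne_false j ((hbelow true).symm.trans (hbelow false))

-- Dually, no up beat points: a point of level `k < n` lies below two points of level `k + 1`.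
theorem eq_id_of_id_specializes {n : ℕ} {ψ : C(SpherePt n, SpherePt n)}
    (h : ContinuousMap.id _ ⤳ ψ) : ψ = ContinuousMap.id _ := by
  have hψ : ∀ x, x ⤳ ψ x := specializes_pi.1 (ContinuousMap.specializes_coe.2 h)
  suffices ∀ x, ψ x = x from ContinuousMap.ext this
  intro x
  induction hk : n - level x using Nat.strong_induction_on generalizing x with
  | _ k ih =>
    refine ((specializes_iff.1 (hψ x)).resolve_right fun hlt ↦ ?_).symm
    have hj : level x + 1 ≤ n := by have := level_le (ψ x); omega
    have habove (b : Bool) : ψ x = point n (level x + 1) b := by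
      refine eq_point_of_specializes_point hj ?_ (by omega)
      have hfix := ih (n - (level x + 1)) (by omega) (point n (level x + 1) b)
        (by rw [level_point b hj])
      rw [← hfix]
      exact ψ.map_specializes (specializes_iff.2 (Or.inr (by rw [level_point b hj]; omega)))
    exact point_true_ne_false _ ((habove true).symm.trans (habove false))

theorem isClopen_singleton_id (n : ℕ) : IsClopen {ContinuousMap.id (SpherePt n)} := by
  have : Finite C(SpherePt n, SpherePt n) := .of_injective _ DFunLike.coe_injective
  exact isClopen_singleton_of_specializes fun ψ h ↦
    h.elim eq_id_of_specializes_id eq_id_of_id_specializes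

theorem not_homotopic_const_id {n : ℕ} (y : SpherePt n) :
    ¬ (ContinuousMap.const _ y).Homotopic (ContinuousMap.id _) := fun h ↦
  have hy := h.eq_of_isClopen_singleton (isClopen_singleton_id n)
  point_true_ne_false 0 ((DFunLike.congr_fun hy (point n 0 true)).symm.trans
    (DFunLike.congr_fun hy (point n 0 false)))

theorem mk_point_zero_mem {n : ℕ} (hn : 1 ≤ n) {Q : Set (SpherePt n × SpherePt n)}
    (hQ : IsOpen Q) {p p' : Bool × Bool} (hp : (point n n p.1, point n n p.2) ∈ Q)
    (hp' : (point n n p'.1, point n n p'.2) ∈ Q) (hne : p.1 ≠ p'.1) (x : SpherePt n) :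
    (x, point n 0 false) ∈ Q := by
  obtain ⟨b, hb⟩ := exists_specializes_top x
  obtain rfl | rfl : b = p.1 ∨ b = p'.1 := by
    revert hne; cases b <;> cases p.1 <;> cases p'.1 <;> decide
  · exact (hb.prod (point_zero_specializes_top hn _ _)).mem_open hQ hp
  · exact (hb.prod (point_zero_specializes_top hn _ _)).mem_open hQ hp'

theorem not_admitsMotionPlanner {n : ℕ} (hn : 1 ≤ n) {Q : Set (SpherePt n × SpherePt n)}
    (hQ : IsOpen Q) {p p' : Bool × Bool} (hp : (point n n p.1, point n n p.2) ∈ Q)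
    (hp' : (point n n p'.1, point n n p'.2) ∈ Q) (hne : p ≠ p') : ¬ AdmitsMotionPlanner Q := by
  intro hQ'
  by_cases h₁ : p.1 = p'.1
  · have h₂ : p.swap.1 ≠ p'.swap.1 := fun h₂ ↦ hne (Prod.ext h₁ h₂)
    have hslice :=
      mk_point_zero_mem hn (hQ.preimage continuous_swap) (p := p.swap) (p' := p'.swap) hp hp' h₂
    exact not_homotopic_const_id _ (hQ'.homotopic (f := .const _ _) (g := .id _) hslice)
  · have hslice := mk_point_zero_mem hn hQ hp hp' h₁
    exact not_homotopic_const_id _ (hQ'.homotopic (f := .id _) (g := .const _ _) hslice).symm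

theorem four_le_of_tcCover {n : ℕ} (hn : 1 ≤ n) {k : ℕ} (h : TCCover (SpherePt n) k) :
    4 ≤ k := by
  obtain ⟨Q, hQ, hcov, hplan⟩ := h
  have hmem (p : Bool × Bool) : ∃ i, (point n n p.1, point n n p.2) ∈ Q i :=
    mem_iUnion.1 (hcov ▸ mem_univ _)
  choose F hF using hmem
  by_contra! hk
  obtain ⟨p, p', hne, heq⟩ := Fintype.exists_ne_map_eq_of_card_lt F (by simpa using hk)
  exact not_admitsMotionPlanner hn (hQ _) (hF p) (heq ▸ hF p') hne (hplan _)

theorem tcCover_four {n : ℕ} (hn : 1 ≤ n) : TCCover (SpherePt n) 4 := by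
  simpa using tcCover_of_forall_specializes (point n n) (point_zero_specializes_top hn false)
    exists_specializes_top

end SpherePt

/-- For every `n ≥ 1`, the topological complexity of the minimal
finite model `𝕊ⁿ` of the `n`-sphere equals 4: `TC(𝕊ⁿ) = 4`. -/
theorem tc_minimal_sphere (n : ℕ) (hn : 1 ≤ n) :
    @topologicalComplexity (SpherePt n) (sphereTop n) = 4 :=
  le_antisymm (Nat.sInf_le (SpherePt.tcCover_four hn))
    (le_csInf ⟨4, SpherePt.tcCover_four hn⟩ fun _ ↦ SpherePt.four_le_of_tcCover hn)
end

section
/- Let X = {x_1,…,x_m} and Y = {y_1,…,y_n} be finite discrete spaces with m, n > 1, and let Z = X ⊛ Y be their non-Hausdorff join. Then TC(Z) = n², and TC(Y ⊛ X) = m². -/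
open Set

namespace NHAux

local instance (priority := 2000) NHinst (m n : ℕ) : TopologicalSpace (Fin m ⊕ Fin n) :=
  NHJoinTop (Fin m) (Fin n)

variable {m n : ℕ}

/-- The specialization order on the join: `z ⊑ w` iff `z = w` or `z ∈ X, w ∈ Y`. -/
def zle (z w : Fin m ⊕ Fin n) : Prop := z = w ∨ ∃ x y, z = Sum.inl x ∧ w = Sum.inr y

lemma zle_refl (z : Fin m ⊕ Fin n) : zle z z := Or.inl rfl

lemma isOpen_iff' {U : Set (Fin m ⊕ Fin n)} :
    IsOpen U ↔ (IsOpen (Sum.inl ⁻¹' U) ∧ IsOpen (Sum.inr ⁻¹' U) ∧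
      ((∃ y, Sum.inr y ∈ U) → ∀ x, Sum.inl x ∈ U)) := Iff.rfl

lemma isOpen_down (z : Fin m ⊕ Fin n) : IsOpen {w | zle w z} := by
  refine isOpen_iff'.2 ⟨isOpen_discrete _, isOpen_discrete _, ?_⟩
  rintro ⟨y, (h | ⟨x', y', h, _⟩)⟩ x
  · exact Or.inr ⟨x, y, rfl, h.symm⟩
  · exact absurd h (by simp)

lemma specializes_iff_zle {z w : Fin m ⊕ Fin n} : z ⤳ w ↔ zle z w := by
  constructor
  · intro h
    exact h.mem_open (isOpen_down w) (zle_refl w)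
  · rintro (rfl | ⟨x, y, rfl, rfl⟩)
    · exact specializes_refl _
    · rw [specializes_iff_forall_open]
      intro U hU hw
      exact hU.2.2 ⟨y, hw⟩ x

/-- A "weight" on the edge `x₁ → j₁`, extended by zero. -/
def wbar (x₁ : Fin m) (j₁ : Fin n) (z w : Fin m ⊕ Fin n) : ℤ :=
  if z = Sum.inl x₁ ∧ w = Sum.inr j₁ then 1 else 0

lemma wbar_self (x₁ : Fin m) (j₁ : Fin n) (z : Fin m ⊕ Fin n) : wbar x₁ j₁ z z = 0 := by
  unfold wbar
  split_ifs with h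
  · exact absurd (h.1.symm.trans h.2) (by simp)
  · rfl

lemma wbar_chain (x₁ : Fin m) (j₁ : Fin n) {u v v' : Fin m ⊕ Fin n}
    (h1 : zle u v) (h2 : zle v v') :
    wbar x₁ j₁ u v + wbar x₁ j₁ v v' = wbar x₁ j₁ u v' := by
  rcases h1 with rfl | ⟨x, y, rfl, rfl⟩
  · rw [wbar_self]; ring
  · rcases h2 with rfl | ⟨x', y', h, _⟩
    · rw [wbar_self]; ring
    · exact absurd h (by simp)

lemma step_eq (x₁ : Fin m) (j₁ : Fin n) {A A' B B' a a' b b' : Fin m ⊕ Fin n}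
    (haA : zle a A) (ha'A' : zle a' A') (hbB : zle b B) (hb'B' : zle b' B')
    (hab : zle a b) (hab' : zle a b') (ha'b : zle a' b) (ha'b' : zle a' b')
    (hAB : zle A B) (hAB' : zle A B') (hA'B : zle A' B) (hA'B' : zle A' B') :
    wbar x₁ j₁ a b - wbar x₁ j₁ a' b + wbar x₁ j₁ a' b' - wbar x₁ j₁ a b'
      = wbar x₁ j₁ A B - wbar x₁ j₁ A' B + wbar x₁ j₁ A' B' - wbar x₁ j₁ A B' := by
  have e1 := (wbar_chain x₁ j₁ hab hbB).trans (wbar_chain x₁ j₁ haA hAB).symm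
  have e2 := (wbar_chain x₁ j₁ ha'b hbB).trans (wbar_chain x₁ j₁ ha'A' hA'B).symm
  have e3 := (wbar_chain x₁ j₁ ha'b' hb'B').trans (wbar_chain x₁ j₁ ha'A' hA'B').symm
  have e4 := (wbar_chain x₁ j₁ hab' hb'B').trans (wbar_chain x₁ j₁ haA hAB').symm
  omega

lemma crown_const (x₁ : Fin m) (j₁ : Fin n)
    (ωA ωA' ωB ωB' : C(unitInterval, Fin m ⊕ Fin n))
    (hAB : ∀ t, zle (ωA t) (ωB t)) (hAB' : ∀ t, zle (ωA t) (ωB' t))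
    (hA'B : ∀ t, zle (ωA' t) (ωB t)) (hA'B' : ∀ t, zle (ωA' t) (ωB' t)) :
    wbar x₁ j₁ (ωA 0) (ωB 0) - wbar x₁ j₁ (ωA' 0) (ωB 0)
      + wbar x₁ j₁ (ωA' 0) (ωB' 0) - wbar x₁ j₁ (ωA 0) (ωB' 0)
    = wbar x₁ j₁ (ωA 1) (ωB 1) - wbar x₁ j₁ (ωA' 1) (ωB 1)
      + wbar x₁ j₁ (ωA' 1) (ωB' 1) - wbar x₁ j₁ (ωA 1) (ωB' 1) := by
  set W : unitInterval → ℤ := fun t =>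
    wbar x₁ j₁ (ωA t) (ωB t) - wbar x₁ j₁ (ωA' t) (ωB t)
      + wbar x₁ j₁ (ωA' t) (ωB' t) - wbar x₁ j₁ (ωA t) (ωB' t) with hWdef
  have hW : IsLocallyConstant W := by
    rw [IsLocallyConstant.iff_eventually_eq]
    intro t
    have hev : ∀ (ω : C(unitInterval, Fin m ⊕ Fin n)), ∀ᶠ t' in nhds t, zle (ω t') (ω t) := by
      intro ω
      have hop : IsOpen (ω ⁻¹' {w | zle w (ω t)}) := (isOpen_down _).preimage ω.continuous
      exact Filter.eventually_iff_exists_mem.2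
        ⟨_, hop.mem_nhds (zle_refl _), fun t' ht' => ht'⟩
    filter_upwards [hev ωA, hev ωA', hev ωB, hev ωB'] with t' h1 h2 h3 h4
    exact step_eq x₁ j₁ h1 h2 h3 h4 (hAB t') (hAB' t') (hA'B t') (hA'B' t')
      (hAB t) (hAB' t) (hA'B t) (hA'B' t)
  exact hW.apply_eq_of_preconnectedSpace 0 1

lemma mem_of_open {Q : Set ((Fin m ⊕ Fin n) × (Fin m ⊕ Fin n))} (hQ : IsOpen Q)
    {j₁ j₂ : Fin n} (h : (Sum.inr j₁, Sum.inr j₂) ∈ Q) {z w : Fin m ⊕ Fin n}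
    (hz : zle z (Sum.inr j₁)) (hw : zle w (Sum.inr j₂)) : (z, w) ∈ Q := by
  have hzs : (z, w) ⤳ ((Sum.inr j₁ : Fin m ⊕ Fin n), (Sum.inr j₂ : Fin m ⊕ Fin n)) :=
    (specializes_iff_zle.2 hz).prod (specializes_iff_zle.2 hw)
  exact hzs.mem_open hQ h

lemma planner_eq_fst (hm : 1 < m) {Q : Set ((Fin m ⊕ Fin n) × (Fin m ⊕ Fin n))}
    (hQ : IsOpen Q) (hpl : AdmitsMotionPlanner Q) {j₁ j₂ j₁' j₂' : Fin n}
    (h1 : (Sum.inr j₁, Sum.inr j₂) ∈ Q) (h2 : (Sum.inr j₁', Sum.inr j₂') ∈ Q) :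
    j₁ = j₁' := by
  by_contra hne
  obtain ⟨s, hsend⟩ := hpl
  set x₁ : Fin m := ⟨0, by omega⟩ with hx₁
  set x₂ : Fin m := ⟨1, hm⟩ with hx₂
  have hx12 : x₁ ≠ x₂ := by simp [hx₁, hx₂, Fin.ext_iff]
  set c : Fin m ⊕ Fin n := Sum.inl x₁ with hc
  have hcz : ∀ j : Fin n, zle c (Sum.inr j) := fun j => Or.inr ⟨x₁, j, rfl, rfl⟩
  have memA : (Sum.inl x₁, c) ∈ Q := mem_of_open hQ h1 (Or.inr ⟨_, _, rfl, rfl⟩) (hcz j₂)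
  have memA' : (Sum.inl x₂, c) ∈ Q := mem_of_open hQ h1 (Or.inr ⟨_, _, rfl, rfl⟩) (hcz j₂)
  have memB : (Sum.inr j₁, c) ∈ Q := mem_of_open hQ h1 (zle_refl _) (hcz j₂)
  have memB' : (Sum.inr j₁', c) ∈ Q := mem_of_open hQ h2 (zle_refl _) (hcz j₂')
  set qA : Q := ⟨_, memA⟩
  set qA' : Q := ⟨_, memA'⟩
  set qB : Q := ⟨_, memB⟩
  set qB' : Q := ⟨_, memB'⟩
  have hspec : ∀ (u v : Q), zle u.1.1 v.1.1 →
      zle u.1.2 v.1.2 → ∀ t, zle (s u t) (s v t) := by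
    intro u v hu hv t
    have h1 : u ⤳ v := Topology.IsInducing.subtypeVal.specializes_iff.1
      ((specializes_iff_zle.2 hu).prod (specializes_iff_zle.2 hv))
    exact specializes_iff_zle.1 ((h1.map s.continuous).map (continuous_eval_const t))
  have key := crown_const x₁ j₁ (s qA) (s qA') (s qB) (s qB')
    (hspec qA qB (Or.inr ⟨_, _, rfl, rfl⟩) (zle_refl _))
    (hspec qA qB' (Or.inr ⟨_, _, rfl, rfl⟩) (zle_refl _))
    (hspec qA' qB (Or.inr ⟨_, _, rfl, rfl⟩) (zle_refl _))
    (hspec qA' qB' (Or.inr ⟨_, _, rfl, rfl⟩) (zle_refl _))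
  have e0 : ∀ (q : Q), s q 0 = q.1.1 := fun q => congrArg Prod.fst (hsend q)
  have e1 : ∀ (q : Q), s q 1 = q.1.2 := fun q => congrArg Prod.snd (hsend q)
  rw [e0 qA, e0 qA', e0 qB, e0 qB', e1 qA, e1 qA', e1 qB, e1 qB'] at key
  simp only [qA, qA', qB, qB', wbar, hc] at key
  simp [hx12, Ne.symm hx12, hne, Ne.symm hne, Fin.ext_iff] at key

lemma planner_eq (hm : 1 < m) {Q : Set ((Fin m ⊕ Fin n) × (Fin m ⊕ Fin n))}
    (hQ : IsOpen Q) (hpl : AdmitsMotionPlanner Q) {j₁ j₂ j₁' j₂' : Fin n}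
    (h1 : (Sum.inr j₁, Sum.inr j₂) ∈ Q) (h2 : (Sum.inr j₁', Sum.inr j₂') ∈ Q) :
    j₁ = j₁' ∧ j₂ = j₂' := by
  refine ⟨planner_eq_fst hm hQ hpl h1 h2, ?_⟩
  -- swap the two coordinates
  set Q' : Set ((Fin m ⊕ Fin n) × (Fin m ⊕ Fin n)) := Prod.swap ⁻¹' Q with hQ'def
  have hQ' : IsOpen Q' := hQ.preimage continuous_swap
  have hpl' : AdmitsMotionPlanner Q' := by
    obtain ⟨s, hsend⟩ := hpl
    have hswap : Continuous (fun q : Q' => (⟨Prod.swap q.1, q.2⟩ : Q)) :=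
      Continuous.subtype_mk (continuous_swap.comp continuous_subtype_val) _
    refine ⟨⟨fun q => (s ⟨Prod.swap q.1, q.2⟩).comp
      ⟨unitInterval.symm, unitInterval.continuous_symm⟩, ?_⟩, ?_⟩
    · exact (ContinuousMap.continuous_precomp _).comp (s.continuous.comp hswap)
    · intro q
      have h := hsend ⟨Prod.swap q.1, q.2⟩
      have h0 := congrArg Prod.fst h
      have h1 := congrArg Prod.snd h
      simp only [ContinuousMap.comp_apply, ContinuousMap.coe_mk]
      rw [show unitInterval.symm 0 = 1 by simp, show unitInterval.symm 1 = 0 by simp]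
      exact Prod.ext (by simpa using h1) (by simpa using h0)
  exact planner_eq_fst hm hQ' hpl' h2 h1 |>.symm ▸ rfl

/-! ### Upper bound -/

def Wset (m : ℕ) {n : ℕ} (i : Fin n) : Set (Fin m ⊕ Fin n) :=
  Set.range Sum.inl ∪ {Sum.inr i}

lemma mem_Wset_iff {i : Fin n} {z : Fin m ⊕ Fin n} : z ∈ Wset m i ↔ zle z (Sum.inr i) := by
  constructor
  · rintro (⟨x, rfl⟩ | h)
    · exact Or.inr ⟨x, i, rfl, rfl⟩
    · exact Or.inl h
  · rintro (rfl | ⟨x, y, rfl, h⟩)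
    · exact Or.inr rfl
    · exact Or.inl ⟨x, rfl⟩

lemma isOpen_Wset (i : Fin n) : IsOpen (Wset m i) := by
  refine isOpen_iff'.2 ⟨isOpen_discrete _, isOpen_discrete _, ?_⟩
  exact fun _ x => Or.inl ⟨x, rfl⟩

/-- The step path that sits at `z` and jumps up to `w` at time 1. -/
noncomputable def upPath {z w : Fin m ⊕ Fin n} (h : zle z w) : Path z w where
  toFun t := if t = 1 then w else z
  continuous_toFun := by
    rw [continuous_def]
    intro U hU
    by_cases hw : w ∈ U
    · have hz : z ∈ U := (specializes_iff_zle.2 h).mem_open hU hw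
      have : (fun t : unitInterval => if t = 1 then w else z) ⁻¹' U = univ := by
        ext t; by_cases ht : t = 1 <;> simp [ht, hz, hw]
      rw [this]; exact isOpen_univ
    · by_cases hz : z ∈ U
      · have : (fun t : unitInterval => if t = 1 then w else z) ⁻¹' U = {1}ᶜ := by
          ext t; by_cases ht : t = 1 <;> simp [ht, hz, hw]
        rw [this]; exact isOpen_compl_singleton
      · have : (fun t : unitInterval => if t = 1 then w else z) ⁻¹' U = ∅ := by
          ext t; by_cases ht : t = 1 <;> simp [ht, hz, hw]
        rw [this]; exact isOpen_empty
  source' := by simp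
  target' := by simp

lemma continuous_upFamily {A : Type*} [TopologicalSpace A] {f : A → Fin m ⊕ Fin n}
    (hf : Continuous f) {w : Fin m ⊕ Fin n} (h : ∀ a, zle (f a) w) :
    Continuous (fun p : A × unitInterval => if p.2 = 1 then w else f p.1) := by
  rw [continuous_def]
  intro U hU
  by_cases hw : w ∈ U
  · have hz : ∀ a, f a ∈ U := fun a => (specializes_iff_zle.2 (h a)).mem_open hU hw
    have : (fun p : A × unitInterval => if p.2 = 1 then w else f p.1) ⁻¹' U = univ := by
      ext p; by_cases ht : p.2 = 1 <;> simp [ht, hz, hw]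
    rw [this]; exact isOpen_univ
  · have : (fun p : A × unitInterval => if p.2 = 1 then w else f p.1) ⁻¹' U
        = (f ⁻¹' U) ×ˢ {(1 : unitInterval)}ᶜ := by
      ext p; by_cases ht : p.2 = 1 <;> simp [ht, hw]
    rw [this]; exact (hU.preimage hf).prod isOpen_compl_singleton

lemma continuous_upPath_family {A : Type*} [TopologicalSpace A] {f : A → Fin m ⊕ Fin n}
    (hf : Continuous f) {w : Fin m ⊕ Fin n} (h : ∀ a, zle (f a) w) :
    Continuous ↿(fun a => upPath (h a)) := by
  have := continuous_upFamily hf h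
  exact this

lemma planner_Wset (hn : 0 < n) (hm : 0 < m) (i j : Fin n) :
    AdmitsMotionPlanner ((Wset m i) ×ˢ (Wset m j)) := by
  set x₀ : Fin m := ⟨0, hm⟩
  set D := ((Wset m i) ×ˢ (Wset m j) : Set ((Fin m ⊕ Fin n) × (Fin m ⊕ Fin n)))
  have hfst : ∀ q : D, zle q.1.1 (Sum.inr i) := fun q => mem_Wset_iff.1 q.2.1
  have hsnd : ∀ q : D, zle q.1.2 (Sum.inr j) := fun q => mem_Wset_iff.1 q.2.2
  have hmid1 : zle (Sum.inl x₀ : Fin m ⊕ Fin n) (Sum.inr i) := Or.inr ⟨_, _, rfl, rfl⟩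
  have hmid2 : zle (Sum.inl x₀ : Fin m ⊕ Fin n) (Sum.inr j) := Or.inr ⟨_, _, rfl, rfl⟩
  -- the path family
  set γ : ∀ q : D, Path (q.1.1) (q.1.2) := fun q =>
    ((upPath (hfst q)).trans (upPath hmid1).symm).trans
      ((upPath hmid2).trans (upPath (hsnd q)).symm) with hγ
  have hcontfst : Continuous (fun q : D => q.1.1) :=
    continuous_fst.comp continuous_subtype_val
  have hcontsnd : Continuous (fun q : D => q.1.2) :=
    continuous_snd.comp continuous_subtype_val
  have hc1 : Continuous ↿(fun q : D => upPath (hfst q)) :=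
    continuous_upPath_family hcontfst hfst
  have hc2 : Continuous ↿(fun _ : D => (upPath hmid1).symm) :=
    Path.symm_continuous_family _ (continuous_upPath_family continuous_const fun _ => hmid1)
  have hc3 : Continuous ↿(fun _ : D => (upPath hmid2)) :=
    continuous_upPath_family continuous_const fun _ => hmid2
  have hc4 : Continuous ↿(fun q : D => (upPath (hsnd q)).symm) :=
    Path.symm_continuous_family _ (continuous_upPath_family hcontsnd hsnd)
  have hcγ : Continuous ↿γ :=
    Path.trans_continuous_family _ (Path.trans_continuous_family _ hc1 _ hc2) _
      (Path.trans_continuous_family _ hc3 _ hc4)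
  refine ⟨⟨fun q => (γ q).toContinuousMap, ?_⟩, ?_⟩
  · exact ContinuousMap.continuous_of_continuous_uncurry _ hcγ
  · intro q
    simp only [ContinuousMap.coe_mk]
    exact Prod.ext (by simp) (by simp)

lemma tccover (hm : 0 < m) (hn : 0 < n) : TCCover (Fin m ⊕ Fin n) (n ^ 2) := by
  set e : Fin (n ^ 2) → Fin n × Fin n :=
    fun a => finProdFinEquiv.symm (Fin.cast (by ring) a) with he
  refine ⟨fun a => (Wset m (e a).1) ×ˢ (Wset m (e a).2), ?_, ?_, ?_⟩
  · exact fun a => (isOpen_Wset _).prod (isOpen_Wset _)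
  · rw [Set.eq_univ_iff_forall]
    intro p
    set pick : (Fin m ⊕ Fin n) → Fin n := Sum.elim (fun _ => ⟨0, hn⟩) id with hpick
    have hpickmem : ∀ z, z ∈ Wset m (pick z) := by
      rintro (x | y)
      · exact Or.inl ⟨x, rfl⟩
      · exact Or.inr rfl
    refine Set.mem_iUnion.2 ⟨Fin.cast (by ring) (finProdFinEquiv (pick p.1, pick p.2)), ?_⟩
    have hcc : Fin.cast (by ring : n ^ 2 = n * n)
        (Fin.cast (by ring : n * n = n ^ 2) (finProdFinEquiv (pick p.1, pick p.2)))
        = finProdFinEquiv (pick p.1, pick p.2) := by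
      ext; simp
    have : e (Fin.cast (by ring : n * n = n ^ 2) (finProdFinEquiv (pick p.1, pick p.2)))
        = (pick p.1, pick p.2) := by
      rw [he]
      simp only [hcc, Equiv.symm_apply_apply]
    rw [this]
    exact ⟨hpickmem _, hpickmem _⟩
  · exact fun a => planner_Wset hn hm _ _

lemma tc_aux (m n : ℕ) (hm : 1 < m) (hn : 1 < n) :
    @topologicalComplexity (Fin m ⊕ Fin n) (NHJoinTop (Fin m) (Fin n)) = n ^ 2 := by
  show topologicalComplexity (Fin m ⊕ Fin n) = n ^ 2
  have hub := tccover (m := m) (n := n) (by omega) (by omega)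
  have hlb : ∀ k, TCCover (Fin m ⊕ Fin n) k → n ^ 2 ≤ k := by
    intro k hk
    obtain ⟨Q, hopen, hcover, hplan⟩ := hk
    have hchoice : ∀ p : Fin n × Fin n, ∃ a : Fin k,
        ((Sum.inr p.1 : Fin m ⊕ Fin n), (Sum.inr p.2 : Fin m ⊕ Fin n)) ∈ Q a := by
      intro p
      have := Set.eq_univ_iff_forall.1 hcover
        ((Sum.inr p.1 : Fin m ⊕ Fin n), (Sum.inr p.2 : Fin m ⊕ Fin n))
      exact Set.mem_iUnion.1 this
    choose f hf using hchoice
    have hinj : Function.Injective f := by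
      intro p q hpq
      have h2 : ((Sum.inr q.1 : Fin m ⊕ Fin n), (Sum.inr q.2 : Fin m ⊕ Fin n)) ∈ Q (f p) := by
        rw [hpq]; exact hf q
      obtain ⟨h3, h4⟩ := planner_eq hm (hopen (f p)) (hplan (f p)) (hf p) h2
      exact Prod.ext h3 h4
    have := Fintype.card_le_of_injective f hinj
    simpa [pow_two] using this
  exact le_antisymm (Nat.sInf_le hub) (le_csInf ⟨_, hub⟩ fun k hk => hlb k hk)

end NHAux

/-- Let `X = {x_1,…,x_m}` and `Y = {y_1,…,y_n}` be finite discrete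
spaces (`Fin m` and `Fin n` carry the discrete topology) with `m, n > 1`, and let
`Z = X ⊛ Y` be their non-Hausdorff join.  Then `TC(Z) = n²` and `TC(Y ⊛ X) = m²`. -/

theorem tc_join_discrete (m n : ℕ) (hm : 1 < m) (hn : 1 < n) :
    @topologicalComplexity (Fin m ⊕ Fin n) (NHJoinTop (Fin m) (Fin n)) = n ^ 2 ∧
    @topologicalComplexity (Fin n ⊕ Fin m) (NHJoinTop (Fin n) (Fin m)) = m ^ 2 :=
  ⟨NHAux.tc_aux m n hm hn, NHAux.tc_aux n m hn hm⟩
end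

section
/- Let X = {x_1,…,x_m} and Y = {y_1,…,y_n} be finite discrete spaces with m, n > 1, and let Z = X ⊛ Y. Then any open subset Q ⊆ Z × Z admitting a motion planner contains at most one maximal point of Z × Z, i.e., at most one point of the form (y_i, y_j) with y_i, y_j ∈ Y. -/
open Set

def nhj (m n : ℕ) : TopologicalSpace (Fin m ⊕ Fin n) :=
  NHJoinTop (Fin m) (Fin n)

attribute [local instance 2000] nhj

section Aux

variable {m n : ℕ}

lemma nhj_isOpen_iff {U : Set (Fin m ⊕ Fin n)} :
    IsOpen U ↔ IsOpen (Sum.inl ⁻¹' U) ∧ IsOpen (Sum.inr ⁻¹' U) ∧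
      ((∃ y, Sum.inr y ∈ U) → ∀ x, Sum.inl x ∈ U) := Iff.rfl

lemma isOpen_inl_singleton (x : Fin m) :
    IsOpen ({Sum.inl x} : Set (Fin m ⊕ Fin n)) := by
  refine nhj_isOpen_iff.mpr ⟨isOpen_discrete _, isOpen_discrete _, ?_⟩
  rintro ⟨y, hy⟩
  simp at hy

lemma isOpen_xpart : IsOpen (Set.range Sum.inl : Set (Fin m ⊕ Fin n)) := by
  refine nhj_isOpen_iff.mpr ⟨isOpen_discrete _, isOpen_discrete _, ?_⟩
  rintro ⟨y, hy⟩
  simp at hy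

lemma isOpen_xpart_union_inr (y : Fin n) :
    IsOpen (Set.range Sum.inl ∪ {Sum.inr y} : Set (Fin m ⊕ Fin n)) := by
  refine nhj_isOpen_iff.mpr ⟨isOpen_discrete _, isOpen_discrete _, fun _ x => ?_⟩
  exact Or.inl ⟨x, rfl⟩

lemma isClosed_inr_singleton (y : Fin n) :
    IsClosed ({Sum.inr y} : Set (Fin m ⊕ Fin n)) := by
  rw [← isOpen_compl_iff]
  refine nhj_isOpen_iff.mpr ⟨isOpen_discrete _, isOpen_discrete _, fun _ x => ?_⟩
  simp

lemma inl_specializes_inr (x : Fin m) (y : Fin n) :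
    (Sum.inl x : Fin m ⊕ Fin n) ⤳ Sum.inr y := by
  rw [specializes_iff_forall_open]
  intro U hU hy
  exact (nhj_isOpen_iff.mp hU).2.2 ⟨y, hy⟩ x

lemma inr_specializes {y : Fin n} {z : Fin m ⊕ Fin n}
    (h : (Sum.inr y : Fin m ⊕ Fin n) ⤳ z) : z = Sum.inr y := by
  cases z with
  | inl x =>
    have := h.mem_open (isOpen_inl_singleton x) rfl
    simp at this
  | inr y' =>
    have := h.mem_open (isOpen_xpart_union_inr y') (Or.inr rfl)
    rcases this with ⟨x, hx⟩ | h'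
    · exact absurd hx (by simp)
    · simpa using h'.symm

lemma mem_ypart_of_specializes {x₁ x₂ : Fin m} (hx : x₁ ≠ x₂) {z : Fin m ⊕ Fin n}
    (h1 : (Sum.inl x₁ : Fin m ⊕ Fin n) ⤳ z) (h2 : (Sum.inl x₂ : Fin m ⊕ Fin n) ⤳ z) :
    z ∈ Set.range (Sum.inr : Fin n → Fin m ⊕ Fin n) := by
  cases z with
  | inl x =>
    have e1 := h1.mem_open (isOpen_inl_singleton x) rfl
    have e2 := h2.mem_open (isOpen_inl_singleton x) rfl
    simp only [mem_singleton_iff, Sum.inl.injEq] at e1 e2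
    exact absurd (e1.trans e2.symm) hx
  | inr y => exact ⟨y, rfl⟩

end Aux

section Aux2

/-- A continuous map on a preconnected set into a "relatively discrete" set `P`
is constant. -/
lemma eq_on_preconnected {γ : Type*} [TopologicalSpace γ] {f : ℝ → γ} (hf : Continuous f)
    {s : Set ℝ} (hs : IsPreconnected s) {P : Set γ}
    (hP : ∀ z ∈ P, ∃ O : Set γ, IsOpen O ∧ z ∈ O ∧ ∀ w ∈ P ∩ O, w = z)
    (hmaps : Set.MapsTo f s P) {u v : ℝ} (hu : u ∈ s) (hv : v ∈ s) : f u = f v := by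
  classical
  by_contra hne
  set z := f u with hzdef
  obtain ⟨Oz, hOzo, hzOz, hOzsep⟩ := hP z (hmaps hu)
  choose O hOo hmemO hsep using hP
  set V : Set γ := ⋃ (w : γ) (hw : w ∈ P), if h : w = z then ∅ else O w hw with hV
  have hVo : IsOpen V := by
    refine isOpen_iUnion fun w => isOpen_iUnion fun hw => ?_
    split
    · exact isOpen_empty
    · exact hOo w hw
  have hcover : s ⊆ f ⁻¹' Oz ∪ f ⁻¹' V := by
    intro t ht
    by_cases h : f t = z
    · exact Or.inl (by simp only [Set.mem_preimage]; rw [h]; exact hzOz)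
    · refine Or.inr ?_
      simp only [Set.mem_preimage, hV, Set.mem_iUnion]
      exact ⟨f t, hmaps ht, by rw [dif_neg h]; exact hmemO _ _⟩
  have hdisj : ¬ (s ∩ (f ⁻¹' Oz ∩ f ⁻¹' V)).Nonempty := by
    rintro ⟨t, hts, htOz, htV⟩
    simp only [Set.mem_preimage, hV, Set.mem_iUnion] at htOz htV
    obtain ⟨w, hw, hwin⟩ := htV
    by_cases h : w = z
    · rw [dif_pos h] at hwin; exact hwin
    · rw [dif_neg h] at hwin
      have e1 : f t = z := hOzsep _ ⟨hmaps hts, htOz⟩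
      have e2 : f t = w := hsep w hw _ ⟨hmaps hts, hwin⟩
      exact h (e2.symm.trans e1)
  have hune : (s ∩ f ⁻¹' Oz).Nonempty := ⟨u, hu, hzOz⟩
  have hvne : (s ∩ f ⁻¹' V).Nonempty := by
    refine ⟨v, hv, ?_⟩
    simp only [Set.mem_preimage, hV, Set.mem_iUnion]
    exact ⟨f v, hmaps hv, by rw [dif_neg (fun (h : f v = z) => hne h.symm)]; exact hmemO _ _⟩
  exact hdisj (hs _ _ (hOzo.preimage hf) (hVo.preimage hf) hcover hune hvne)

end Aux2

section Core

variable {m n : ℕ}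

lemma xpart_rel_discrete :
    ∀ z ∈ Set.range (Sum.inl : Fin m → Fin m ⊕ Fin n),
      ∃ O : Set (Fin m ⊕ Fin n), IsOpen O ∧ z ∈ O ∧
        ∀ w ∈ Set.range (Sum.inl : Fin m → Fin m ⊕ Fin n) ∩ O, w = z := by
  rintro z ⟨x, rfl⟩
  exact ⟨{Sum.inl x}, isOpen_inl_singleton x, rfl, fun w hw => hw.2⟩

lemma ypart_rel_discrete :
    ∀ z ∈ Set.range (Sum.inr : Fin n → Fin m ⊕ Fin n),
      ∃ O : Set (Fin m ⊕ Fin n), IsOpen O ∧ z ∈ O ∧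
        ∀ w ∈ Set.range (Sum.inr : Fin n → Fin m ⊕ Fin n) ∩ O, w = z := by
  rintro z ⟨y, rfl⟩
  refine ⟨Set.range Sum.inl ∪ {Sum.inr y}, isOpen_xpart_union_inr y, Or.inr rfl, ?_⟩
  rintro w ⟨⟨y', rfl⟩, hw⟩
  rcases hw with ⟨x, hx⟩ | hw
  · exact absurd hx (by simp)
  · exact hw

lemma not_mem_ypart_iff {z : Fin m ⊕ Fin n} :
    z ∉ Set.range (Sum.inr : Fin n → Fin m ⊕ Fin n) ↔
      z ∈ Set.range (Sum.inl : Fin m → Fin m ⊕ Fin n) := by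
  cases z <;> simp

/-- Core combinatorial lemma: four paths with the domination relations force equal
terminal maximal points. -/
lemma core_lemma {x₁ x₂ : Fin m} (hx : x₁ ≠ x₂) {a b : Fin n}
    {α β φ ψ : ℝ → Fin m ⊕ Fin n}
    (hα : Continuous α) (hβ : Continuous β) (hφ : Continuous φ) (hψ : Continuous ψ)
    (hφα : ∀ t, φ t ⤳ α t) (hφβ : ∀ t, φ t ⤳ β t)
    (hψα : ∀ t, ψ t ⤳ α t) (hψβ : ∀ t, ψ t ⤳ β t)
    (hφ0 : φ 0 = Sum.inl x₁) (hφ1 : φ 1 = Sum.inl x₂) (hψ1 : ψ 1 = Sum.inl x₁)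
    (hα1 : α 1 = Sum.inr a) (hβ1 : β 1 = Sum.inr b) : a = b := by
  set Yp : Set (Fin m ⊕ Fin n) := Set.range Sum.inr with hYp
  set Xp : Set (Fin m ⊕ Fin n) := Set.range Sum.inl with hXp
  have hYpc : IsClosed Yp := by
    rw [← isOpen_compl_iff]
    have : Ypᶜ = Xp := by
      ext z; cases z <;> simp [hYp, hXp]
    rw [this]; exact isOpen_xpart
  set W : Set ℝ := (φ ⁻¹' Yp ∪ ψ ⁻¹' Yp) ∩ Set.Icc (0:ℝ) 1 with hW
  have hWc : IsClosed W :=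
    ((hYpc.preimage hφ).union (hYpc.preimage hψ)).inter isClosed_Icc
  have hWsub : W ⊆ Set.Icc (0:ℝ) 1 := Set.inter_subset_right
  have hWcpt : IsCompact W := isCompact_Icc.of_isClosed_subset hWc hWsub
  have hWne : W.Nonempty := by
    by_contra hne
    rw [Set.not_nonempty_iff_eq_empty] at hne
    have hmaps : Set.MapsTo φ (Set.Icc (0:ℝ) 1) Xp := by
      intro t ht
      rw [← not_mem_ypart_iff]
      intro hY
      have htW : t ∈ W := ⟨Or.inl hY, ht⟩
      rw [hne] at htW
      exact htW
    have := eq_on_preconnected hφ isPreconnected_Icc xpart_rel_discrete hmaps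
      (Set.left_mem_Icc.mpr zero_le_one) (Set.right_mem_Icc.mpr zero_le_one)
    rw [hφ0, hφ1] at this
    exact hx (by simpa using this)
  set t₀ : ℝ := sSup W with ht₀
  have ht₀W : t₀ ∈ W := hWcpt.sSup_mem hWne
  have h1W : (1:ℝ) ∉ W := by
    rintro ⟨h, -⟩
    rcases h with h | h <;> simp only [Set.mem_preimage, hψ1, hφ1] at h <;>
      · obtain ⟨y, hy⟩ := h; exact absurd hy (by simp)
  have ht₀mem := hWsub ht₀W
  have ht₀lt : t₀ < 1 := lt_of_le_of_ne ht₀mem.2 (fun h => h1W (h ▸ ht₀W))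
  have hnotW : ∀ t ∈ Set.Ioc t₀ (1:ℝ), t ∉ W := by
    intro t ht htW
    exact absurd (le_csSup (hWcpt.bddAbove) htW) (not_le.mpr ht.1)
  have hIccmem : ∀ t ∈ Set.Ioc t₀ (1:ℝ), t ∈ Set.Icc (0:ℝ) 1 :=
    fun t ht => ⟨le_of_lt (lt_of_le_of_lt ht₀mem.1 ht.1), ht.2⟩
  have hφX : Set.MapsTo φ (Set.Ioc t₀ 1) Xp := by
    intro t ht
    rw [← not_mem_ypart_iff]
    exact fun hY => hnotW t ht ⟨Or.inl hY, hIccmem t ht⟩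
  have hψX : Set.MapsTo ψ (Set.Ioc t₀ 1) Xp := by
    intro t ht
    rw [← not_mem_ypart_iff]
    exact fun hY => hnotW t ht ⟨Or.inr hY, hIccmem t ht⟩
  have h1mem : (1:ℝ) ∈ Set.Ioc t₀ (1:ℝ) := ⟨ht₀lt, le_refl 1⟩
  have hφconst : ∀ t ∈ Set.Ioc t₀ (1:ℝ), φ t = Sum.inl x₂ := fun t ht => by
    rw [← hφ1]
    exact eq_on_preconnected hφ isPreconnected_Ioc xpart_rel_discrete hφX ht h1mem
  have hψconst : ∀ t ∈ Set.Ioc t₀ (1:ℝ), ψ t = Sum.inl x₁ := fun t ht => by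
    rw [← hψ1]
    exact eq_on_preconnected hψ isPreconnected_Ioc xpart_rel_discrete hψX ht h1mem
  have hαY : Set.MapsTo α (Set.Ioc t₀ 1) Yp := by
    intro t ht
    refine mem_ypart_of_specializes hx ?_ ?_
    · rw [← hψconst t ht]; exact hψα t
    · rw [← hφconst t ht]; exact hφα t
  have hβY : Set.MapsTo β (Set.Ioc t₀ 1) Yp := by
    intro t ht
    refine mem_ypart_of_specializes hx ?_ ?_
    · rw [← hψconst t ht]; exact hψβ t
    · rw [← hφconst t ht]; exact hφβ t
  have hαconst : ∀ t ∈ Set.Ioc t₀ (1:ℝ), α t = Sum.inr a := fun t ht => by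
    rw [← hα1]
    exact eq_on_preconnected hα isPreconnected_Ioc ypart_rel_discrete hαY ht h1mem
  have hβconst : ∀ t ∈ Set.Ioc t₀ (1:ℝ), β t = Sum.inr b := fun t ht => by
    rw [← hβ1]
    exact eq_on_preconnected hβ isPreconnected_Ioc ypart_rel_discrete hβY ht h1mem
  -- boundary value at t₀ by continuity
  have hclos : t₀ ∈ closure (Set.Ioc t₀ (1:ℝ)) := by
    rw [closure_Ioc (ne_of_lt ht₀lt)]
    exact ⟨le_refl t₀, le_of_lt ht₀lt⟩
  have key : ∀ (g : ℝ → Fin m ⊕ Fin n), Continuous g →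
      (∀ t ∈ Set.Ioc t₀ (1:ℝ), g t = Sum.inr a) → g t₀ = Sum.inr a := by
    intro g hg hconst
    have h1 : g t₀ ∈ closure (g '' Set.Ioc t₀ 1) := mem_closure_image hg.continuousAt hclos
    have h2 : g '' Set.Ioc t₀ 1 ⊆ {Sum.inr a} := by
      rintro w ⟨t, ht, rfl⟩; exact hconst t ht
    have := (closure_mono h2).trans
      (closure_minimal (le_refl _) (isClosed_inr_singleton a)).subset
    exact this h1
  have hαt₀ : α t₀ = Sum.inr a := key α hα hαconst
  have hβt₀ : β t₀ = Sum.inr b := by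
    have h1 : β t₀ ∈ closure (β '' Set.Ioc t₀ 1) := mem_closure_image hβ.continuousAt hclos
    have h2 : β '' Set.Ioc t₀ 1 ⊆ {Sum.inr b} := by
      rintro w ⟨t, ht, rfl⟩; exact hβconst t ht
    exact ((closure_mono h2).trans
      (closure_minimal (le_refl _) (isClosed_inr_singleton b)).subset) h1
  -- at t₀ one of φ, ψ is in Yp, forcing α t₀ = β t₀
  rcases ht₀W.1 with h | h
  · obtain ⟨y, hy⟩ := h
    have e1 : α t₀ = Sum.inr y := inr_specializes (hy ▸ hφα t₀)
    have e2 : β t₀ = Sum.inr y := inr_specializes (hy ▸ hφβ t₀)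
    rw [hαt₀] at e1; rw [hβt₀] at e2
    simpa using (e1.trans e2.symm)
  · obtain ⟨y, hy⟩ := h
    have e1 : α t₀ = Sum.inr y := inr_specializes (hy ▸ hψα t₀)
    have e2 : β t₀ = Sum.inr y := inr_specializes (hy ▸ hψβ t₀)
    rw [hαt₀] at e1; rw [hβt₀] at e2
    simpa using (e1.trans e2.symm)

end Core

section MainAux

variable {m n : ℕ}

/-- Given a motion planner on an open `Q` containing two maximal points with equal
first or second coordinates pattern, we extract the four paths and apply the core. -/
lemma planner_core (Q : Set ((Fin m ⊕ Fin n) × (Fin m ⊕ Fin n))) (hQ : IsOpen Q)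
    (s : C(Q, C(unitInterval, Fin m ⊕ Fin n)))
    (hs : ∀ q : Q, ((s q) 0, (s q) 1) = (q : (Fin m ⊕ Fin n) × (Fin m ⊕ Fin n)))
    (i j i' j' : Fin n)
    (hij : ((Sum.inr i : Fin m ⊕ Fin n), (Sum.inr j : Fin m ⊕ Fin n)) ∈ Q)
    (hij' : ((Sum.inr i' : Fin m ⊕ Fin n), (Sum.inr j' : Fin m ⊕ Fin n)) ∈ Q)
    (x₁ x₂ : Fin m) (hx : x₁ ≠ x₂) : i = i' ∧ j = j' := by
  have key : ∀ (p q : Fin m ⊕ Fin n) (y y' : Fin n),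
      ((Sum.inr y : Fin m ⊕ Fin n), (Sum.inr y' : Fin m ⊕ Fin n)) ∈ Q →
      p ⤳ (Sum.inr y : Fin m ⊕ Fin n) → q ⤳ (Sum.inr y' : Fin m ⊕ Fin n) →
      (p, q) ∈ Q :=
    fun p q y y' hmem hp hq => (hp.prod hq).mem_open hQ hmem
  have hA : ((Sum.inl x₁ : Fin m ⊕ Fin n), (Sum.inr j : Fin m ⊕ Fin n)) ∈ Q :=
    key _ _ i j hij (inl_specializes_inr _ _) specializes_rfl
  have hB : ((Sum.inl x₁ : Fin m ⊕ Fin n), (Sum.inr j' : Fin m ⊕ Fin n)) ∈ Q :=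
    key _ _ i' j' hij' (inl_specializes_inr _ _) specializes_rfl
  have hC : ((Sum.inl x₁ : Fin m ⊕ Fin n), (Sum.inl x₂ : Fin m ⊕ Fin n)) ∈ Q :=
    key _ _ i j hij (inl_specializes_inr _ _) (inl_specializes_inr _ _)
  have hD : ((Sum.inl x₁ : Fin m ⊕ Fin n), (Sum.inl x₁ : Fin m ⊕ Fin n)) ∈ Q :=
    key _ _ i j hij (inl_specializes_inr _ _) (inl_specializes_inr _ _)
  have hA' : ((Sum.inr i : Fin m ⊕ Fin n), (Sum.inl x₁ : Fin m ⊕ Fin n)) ∈ Q :=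
    key _ _ i j hij specializes_rfl (inl_specializes_inr _ _)
  have hB' : ((Sum.inr i' : Fin m ⊕ Fin n), (Sum.inl x₁ : Fin m ⊕ Fin n)) ∈ Q :=
    key _ _ i' j' hij' specializes_rfl (inl_specializes_inr _ _)
  have hC' : ((Sum.inl x₂ : Fin m ⊕ Fin n), (Sum.inl x₁ : Fin m ⊕ Fin n)) ∈ Q :=
    key _ _ i j hij (inl_specializes_inr _ _) (inl_specializes_inr _ _)
  -- the reparametrised paths
  set pt : ℝ → unitInterval := fun t => Set.projIcc 0 1 zero_le_one t with hptdef
  have hpt : Continuous pt := continuous_projIcc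
  have hpt0 : pt 0 = 0 := by
    apply Subtype.ext
    simp [hptdef, Set.projIcc]
  have hpt1 : pt 1 = 1 := by
    apply Subtype.ext
    simp [hptdef, Set.projIcc]
  set F : Q → ℝ → (Fin m ⊕ Fin n) := fun q t => s q (pt t) with hFdef
  have hFc : ∀ q, Continuous (F q) := fun q => (s q).continuous.comp hpt
  have hF0 : ∀ q : Q, F q 0 = (q : (Fin m ⊕ Fin n) × (Fin m ⊕ Fin n)).1 := fun q => by
    rw [hFdef]
    simp only [hpt0]
    exact (Prod.ext_iff.mp (hs q)).1
  have hF1 : ∀ q : Q, F q 1 = (q : (Fin m ⊕ Fin n) × (Fin m ⊕ Fin n)).2 := fun q => by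
    rw [hFdef]
    simp only [hpt1]
    exact (Prod.ext_iff.mp (hs q)).2
  have hFspec : ∀ (q q' : Q),
      (q : (Fin m ⊕ Fin n) × (Fin m ⊕ Fin n)) ⤳ (q' : (Fin m ⊕ Fin n) × (Fin m ⊕ Fin n)) →
      ∀ t, F q t ⤳ F q' t := by
    intro q q' h t
    have h1 : q ⤳ q' := (subtype_specializes_iff q q').mpr h
    have h2 : s q ⤳ s q' := h1.map s.continuous
    exact h2.map (continuous_eval_const (pt t))
  constructor
  · -- first coordinates, using reversed paths
    set G : Q → ℝ → (Fin m ⊕ Fin n) := fun q t => F q (1 - t) with hGdef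
    have hGc : ∀ q, Continuous (G q) := fun q =>
      (hFc q).comp (continuous_const.sub continuous_id)
    have hG0 : ∀ q : Q, G q 0 = (q : (Fin m ⊕ Fin n) × (Fin m ⊕ Fin n)).2 := fun q => by
      rw [hGdef]; simp only [sub_zero]; exact hF1 q
    have hG1 : ∀ q : Q, G q 1 = (q : (Fin m ⊕ Fin n) × (Fin m ⊕ Fin n)).1 := fun q => by
      rw [hGdef]; simp only [sub_self]; exact hF0 q
    refine core_lemma hx
      (hGc ⟨_, hA'⟩) (hGc ⟨_, hB'⟩) (hGc ⟨_, hC'⟩) (hGc ⟨_, hD⟩)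
      (fun t => hFspec ⟨_, hC'⟩ ⟨_, hA'⟩ ((inl_specializes_inr x₂ i).prod specializes_rfl) (1 - t))
      (fun t => hFspec ⟨_, hC'⟩ ⟨_, hB'⟩ ((inl_specializes_inr x₂ i').prod specializes_rfl) (1 - t))
      (fun t => hFspec ⟨_, hD⟩ ⟨_, hA'⟩ ((inl_specializes_inr x₁ i).prod specializes_rfl) (1 - t))
      (fun t => hFspec ⟨_, hD⟩ ⟨_, hB'⟩ ((inl_specializes_inr x₁ i').prod specializes_rfl) (1 - t))
      (hG0 ⟨_, hC'⟩) (hG1 ⟨_, hC'⟩) (hG1 ⟨_, hD⟩) (hG1 ⟨_, hA'⟩) (hG1 ⟨_, hB'⟩)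
  · refine core_lemma hx
      (hFc ⟨_, hA⟩) (hFc ⟨_, hB⟩) (hFc ⟨_, hC⟩) (hFc ⟨_, hD⟩)
      (fun t => hFspec ⟨_, hC⟩ ⟨_, hA⟩ (specializes_rfl.prod (inl_specializes_inr x₂ j)) t)
      (fun t => hFspec ⟨_, hC⟩ ⟨_, hB⟩ (specializes_rfl.prod (inl_specializes_inr x₂ j')) t)
      (fun t => hFspec ⟨_, hD⟩ ⟨_, hA⟩ (specializes_rfl.prod (inl_specializes_inr x₁ j)) t)
      (fun t => hFspec ⟨_, hD⟩ ⟨_, hB⟩ (specializes_rfl.prod (inl_specializes_inr x₁ j')) t)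
      (hF0 ⟨_, hC⟩) (hF1 ⟨_, hC⟩) (hF1 ⟨_, hD⟩) (hF1 ⟨_, hA⟩) (hF1 ⟨_, hB⟩)

end MainAux

/-- Let `X = {x_1,…,x_m}` and `Y = {y_1,…,y_n}` be finite discrete
spaces (`Fin m` and `Fin n` carry the discrete topology) with `m, n > 1`, and let
`Z = X ⊛ Y`.  Then any open subset `Q ⊆ Z × Z` admitting a motion planner contains
at most one maximal point of `Z × Z`, i.e. at most one point of the form
`(y_i, y_j)` with `y_i, y_j ∈ Y`. -/
theorem join_planner_at_most_one_maximal (m n : ℕ) (hm : 1 < m) (hn : 1 < n) :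
    letI : TopologicalSpace (Fin m ⊕ Fin n) := NHJoinTop (Fin m) (Fin n)
    ∀ Q : Set ((Fin m ⊕ Fin n) × (Fin m ⊕ Fin n)), IsOpen Q → AdmitsMotionPlanner Q →
      ∀ i j i' j' : Fin n,
        ((Sum.inr i : Fin m ⊕ Fin n), (Sum.inr j : Fin m ⊕ Fin n)) ∈ Q →
        ((Sum.inr i' : Fin m ⊕ Fin n), (Sum.inr j' : Fin m ⊕ Fin n)) ∈ Q →
        i = i' ∧ j = j' := by
  intro Q hQ hpl i j i' j' hij hij'
  obtain ⟨s, hs⟩ := hpl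
  have hx : (⟨0, by omega⟩ : Fin m) ≠ ⟨1, by omega⟩ := by
    simp [Fin.ext_iff]
  exact planner_core Q hQ s hs i j i' j' hij hij' _ _ hx
end

section
/- Let ⋁_{i=1}^m 𝕊¹_{n_i}, with each n_i ≥ 2, be the wedge of m finite models of the circle, formed by identifying the points y_0 of all factors to a single point y_0. Then cat(⋁_{i=1}^m 𝕊¹_{n_i}) ≤ 2; explicitly, the minimal open neighbourhood of the wedge point y_0 and the complement of the set of wedge-point representatives {y_0} form an open cover by two sets whose inclusions are nullhomotopic. -/
open Set

/-- `X` is covered by `k` open sets, each of whose inclusion maps into `X` is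
nullhomotopic. -/
def CatCover (X : Type*) [TopologicalSpace X] (k : ℕ) : Prop :=
  ∃ U : Fin k → Set X,
    (∀ i, IsOpen (U i)) ∧ (⋃ i, U i) = Set.univ ∧
    ∀ i, ContinuousMap.Nullhomotopic (⟨Subtype.val, continuous_subtype_val⟩ : C(U i, X))

/-- The (unreduced) Lusternik–Schnirelmann category of `X`: the least number of open
sets covering `X` such that each inclusion map into `X` is nullhomotopic. -/
noncomputable def lsCat (X : Type*) [TopologicalSpace X] : ℕ := sInf {k | CatCover X k}
/-- `a` is the distinguished point `y_0` of `𝕊¹_k`. -/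
def IsBasePt {k : ℕ} (a : SCirc k) : Prop := ∃ j : Fin k, a = SCirc.y j ∧ (j : ℕ) = 0

/-- The relation identifying the points `y_0` of all the circles `𝕊¹_{f i}`. -/
def wedgeRel (m : ℕ) (f : Fin m → ℕ) (a b : Σ i : Fin m, SCirc (f i)) : Prop :=
  a = b ∨ (IsBasePt a.2 ∧ IsBasePt b.2)

/-- The wedge `⋁_{i} 𝕊¹_{f i}`: the quotient of the disjoint union of the finite
models `𝕊¹_{f i}` identifying the points `y_0` of all factors to a single point,
with the quotient topology. -/
abbrev WedgeSCirc (m : ℕ) (f : Fin m → ℕ) : Type := Quot (wedgeRel m f)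


/-!
A map `g` with `f x ⤳ g x` for all `x` is homotopic to `f` (jump from
`f` to `g` at time `1`). The minimal open neighbourhood of the wedge point `p` consists of the
points specializing to `p`, so its inclusion is homotopic to the constant map `p`.

Removing `y_0` from `𝕊¹_n` leaves the fence `x_0 < y_1 > x_1 < y_2 > ⋯ > x_{n-1}`. Retracting
every fence of the punctured wedge onto its first `c + 1` points gives maps that are pointwise
comparable for consecutive `c`; for large `c` this is the inclusion, for `c = 0` it sends
everything to points `x_0 ⤳ y_0 = p`.
-/

open unitInterval

theorem ContinuousMap.Homotopic.of_specializes {X Y : Type*} [TopologicalSpace X]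
    [TopologicalSpace Y] {f g : C(X, Y)} (h : ∀ x, f x ⤳ g x) : f.Homotopic g := by
  classical
  refine ⟨⟨⟨({1} ×ˢ univ : Set (I × X)).piecewise (fun q => g q.2) (fun q => f q.2), ?_⟩,
    fun x => ?_, fun x => ?_⟩⟩
  · exact (isClosed_singleton.prod isClosed_univ).continuous_piecewise_of_specializes
      (by fun_prop) (by fun_prop) fun q => h q.2
  · simp
  · simp

theorem ContinuousMap.Homotopic.of_specializes_chain {X Y : Type*} [TopologicalSpace X]
    [TopologicalSpace Y] {g : ℕ → C(X, Y)}
    (hg : ∀ k, (∀ x, g k x ⤳ g (k + 1) x) ∨ ∀ x, g (k + 1) x ⤳ g k x) (K : ℕ) :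
    (g 0).Homotopic (g K) := by
  induction K with
  | zero => exact .refl _
  | succ k ih => exact ih.trans <| (hg k).elim .of_specializes fun h => (of_specializes h).symm

theorem catCover_two {X : Type*} [TopologicalSpace X] {U V : Set X} (hU : IsOpen U)
    (hV : IsOpen V) (hUV : U ∪ V = univ)
    (hU' : (⟨Subtype.val, continuous_subtype_val⟩ : C(U, X)).Nullhomotopic)
    (hV' : (⟨Subtype.val, continuous_subtype_val⟩ : C(V, X)).Nullhomotopic) :
    CatCover X 2 :=
  ⟨![U, V], Fin.forall_fin_two.2 ⟨hU, hV⟩, by rw [← hUV]; ext; simp [Fin.exists_fin_two],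
    Fin.forall_fin_two.2 ⟨hU', hV'⟩⟩

/-- The order of the fence `0 < 1 > 2 < 3 > ⋯` on `ℕ`. -/
def FenceLE (v w : ℕ) : Prop := v = w ∨ v % 2 = 0 ∧ (w = v + 1 ∨ v = w + 1)

theorem FenceLE.min {v w : ℕ} (h : FenceLE v w) (c : ℕ) : FenceLE (min v c) (min w c) := by
  unfold FenceLE at *; omega

theorem fenceLE_min_succ_of_even {c : ℕ} (hc : c % 2 = 0) (v : ℕ) :
    FenceLE (min v c) (min v (c + 1)) := by
  unfold FenceLE; omega

theorem fenceLE_min_succ_of_odd {c : ℕ} (hc : c % 2 = 1) (v : ℕ) :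
    FenceLE (min v (c + 1)) (min v c) := by
  unfold FenceLE; omega

namespace SCirc

variable {n : ℕ}

instance : Finite (SCirc n) := inferInstanceAs (Finite (Fin n ⊕ Fin n))

theorem pos : SCirc n → 0 < n
  | Sum.inl j | Sum.inr j => j.pos

@[simp] theorem not_isBasePt_inl (j : Fin n) : ¬IsBasePt (Sum.inl j : SCirc n) := by
  rintro ⟨k, hk, -⟩
  cases hk

@[simp] theorem isBasePt_inr_iff {j : Fin n} : IsBasePt (Sum.inr j : SCirc n) ↔ (j : ℕ) = 0 :=
  ⟨fun ⟨_, hk, h⟩ => by cases hk; exact h, fun h => ⟨j, rfl, h⟩⟩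

/-- The punctured circle `𝕊¹_n ∖ {y_0}` is the fence `x_0 < y_1 > x_1 < ⋯ > x_{n-1}`, and this is
the position of a point along it (`y_0` is not on the fence: its junk index `2 * 0 - 1 = 0` is
that of `x_0`). -/
def fenceIdx : SCirc n → ℕ
  | Sum.inl j => 2 * j
  | Sum.inr j => 2 * j - 1

def fencePt (hn : 0 < n) (v : ℕ) : SCirc n :=
  if v % 2 = 0 then x ⟨v / 2 % n, Nat.mod_lt _ hn⟩ else y ⟨(v + 1) / 2 % n, Nat.mod_lt _ hn⟩

theorem fenceIdx_le {a : SCirc n} (ha : ¬IsBasePt a) : fenceIdx a ≤ 2 * n - 2 := by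
  cases a with
  | inl j => have := j.2; simp only [fenceIdx]; omega
  | inr j => have := j.2; simp only [isBasePt_inr_iff] at ha; simp only [fenceIdx]; omega

theorem fencePt_fenceIdx (hn : 0 < n) {a : SCirc n} (ha : ¬IsBasePt a) :
    fencePt hn (fenceIdx a) = a := by
  cases a with
  | inl j =>
    refine (if_pos (by simp only [fenceIdx]; omega)).trans (congrArg Sum.inl (Fin.ext ?_))
    simp only [fenceIdx]
    rw [Nat.mul_div_cancel_left _ two_pos, Nat.mod_eq_of_lt j.2]
  | inr j =>
    simp only [isBasePt_inr_iff] at ha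
    refine (if_neg (by simp only [fenceIdx]; omega)).trans (congrArg Sum.inr (Fin.ext ?_))
    simp only [fenceIdx]
    rw [show 2 * (j : ℕ) - 1 + 1 = 2 * j by omega, Nat.mul_div_cancel_left _ two_pos,
      Nat.mod_eq_of_lt j.2]

theorem fenceIdx_fencePt (hn : 0 < n) {v : ℕ} (hv : v ≤ 2 * n - 2) :
    fenceIdx (fencePt hn v) = v := by
  unfold fencePt
  split_ifs with h
  · simp only [fenceIdx, x]; rw [Nat.mod_eq_of_lt (by omega)]; omega
  · simp only [fenceIdx, y]; rw [Nat.mod_eq_of_lt (by omega)]; omega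

theorem not_isBasePt_fencePt (hn : 0 < n) {v : ℕ} (hv : v ≤ 2 * n - 2) :
    ¬IsBasePt (fencePt hn v) := by
  unfold fencePt
  split_ifs with h
  · exact not_isBasePt_inl _
  · simp only [y, isBasePt_inr_iff]; rw [Nat.mod_eq_of_lt (by omega)]; omega

theorem not_isBasePt_of_le {a b : SCirc n} (ha : ¬IsBasePt a) (h : le b a) : ¬IsBasePt b := by
  cases b with
  | inl i => exact not_isBasePt_inl i
  | inr i => cases a with
    | inl j => exact h.elim
    | inr j => cases (h : i = j); exact ha

theorem le_iff_fenceLE {a b : SCirc n} (ha : ¬IsBasePt a) (hb : ¬IsBasePt b) :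
    le b a ↔ FenceLE (fenceIdx b) (fenceIdx a) := by
  cases a with
  | inl j => cases b with
    | inl i => simp only [le, fenceIdx, FenceLE, Fin.ext_iff]; omega
    | inr i =>
      simp only [isBasePt_inr_iff] at hb
      simp only [le, fenceIdx, FenceLE, false_iff]; omega
  | inr j => cases b with
    | inl i =>
      simp only [isBasePt_inr_iff] at ha
      have hj := j.2
      have hprev : ((j : ℕ) + n - 1) % n = j - 1 := by
        rw [show (j : ℕ) + n - 1 = j - 1 + n by omega, Nat.add_mod_right,
          Nat.mod_eq_of_lt (by omega)]
      simp only [le, fenceIdx, FenceLE, Fin.ext_iff, hprev]; omega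
    | inr i =>
      simp only [isBasePt_inr_iff] at ha hb
      simp only [le, fenceIdx, FenceLE, Fin.ext_iff]; omega

theorem fencePt_le_fencePt_iff (hn : 0 < n) {v w : ℕ} (hv : v ≤ 2 * n - 2)
    (hw : w ≤ 2 * n - 2) :
    le (fencePt hn v) (fencePt hn w) ↔ FenceLE v w := by
  rw [le_iff_fenceLE (not_isBasePt_fencePt hn hw) (not_isBasePt_fencePt hn hv),
    fenceIdx_fencePt hn hv, fenceIdx_fencePt hn hw]

open Classical in
noncomputable def truncate (c : ℕ) (a : SCirc n) : SCirc n :=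
  if IsBasePt a then a else fencePt a.pos (min (fenceIdx a) c)

theorem truncate_of_isBasePt (c : ℕ) {a : SCirc n} (ha : IsBasePt a) : truncate c a = a :=
  if_pos ha

theorem truncate_of_not_isBasePt (hn : 0 < n) (c : ℕ) {a : SCirc n} (ha : ¬IsBasePt a) :
    truncate c a = fencePt hn (min (fenceIdx a) c) :=
  if_neg ha

theorem truncate_le_truncate_of_le {a b : SCirc n} (ha : ¬IsBasePt a) (h : le b a) (c : ℕ) :
    le (truncate c b) (truncate c a) := by
  have hb := not_isBasePt_of_le ha h
  have := fenceIdx_le ha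
  have := fenceIdx_le hb
  rw [truncate_of_not_isBasePt a.pos c ha, truncate_of_not_isBasePt a.pos c hb]
  refine (fencePt_le_fencePt_iff _ ?_ ?_).2 (((le_iff_fenceLE ha hb).1 h).min c) <;> omega

theorem truncate_le_truncate_succ {c : ℕ} (hc : c % 2 = 0) {a : SCirc n} (ha : ¬IsBasePt a) :
    le (truncate c a) (truncate (c + 1) a) := by
  have := fenceIdx_le ha
  rw [truncate_of_not_isBasePt a.pos _ ha, truncate_of_not_isBasePt a.pos _ ha]
  refine (fencePt_le_fencePt_iff _ ?_ ?_).2 (fenceLE_min_succ_of_even hc _) <;> omega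

theorem truncate_succ_le_truncate {c : ℕ} (hc : c % 2 = 1) {a : SCirc n} (ha : ¬IsBasePt a) :
    le (truncate (c + 1) a) (truncate c a) := by
  have := fenceIdx_le ha
  rw [truncate_of_not_isBasePt a.pos _ ha, truncate_of_not_isBasePt a.pos _ ha]
  refine (fencePt_le_fencePt_iff _ ?_ ?_).2 (fenceLE_min_succ_of_odd hc _) <;> omega

theorem truncate_of_le {c : ℕ} (hc : 2 * n - 2 ≤ c) (a : SCirc n) : truncate c a = a := by
  by_cases ha : IsBasePt a
  · exact truncate_of_isBasePt c ha
  · rw [truncate_of_not_isBasePt a.pos c ha, min_eq_left ((fenceIdx_le ha).trans hc),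
      fencePt_fenceIdx _ ha]

theorem truncate_zero_le {a : SCirc n} (ha : ¬IsBasePt a) :
    le (truncate 0 a) (y ⟨0, a.pos⟩) := by
  rw [truncate_of_not_isBasePt a.pos 0 ha, Nat.min_zero]
  simp [fencePt, x, y, le]

end SCirc

namespace WedgeSCirc

variable {m : ℕ} {f : Fin m → ℕ}

instance : Finite (WedgeSCirc m f) := Quot.finite _

theorem wedgeRel_equivalence : Equivalence (wedgeRel m f) where
  refl _ := .inl rfl
  symm := by
    rintro _ _ (rfl | ⟨ha, hb⟩)
    exacts [.inl rfl, .inr ⟨hb, ha⟩]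
  trans := by
    rintro _ _ _ (rfl | ⟨ha, hb⟩) (rfl | ⟨hb', hc⟩)
    exacts [.inl rfl, .inr ⟨hb', hc⟩, .inr ⟨ha, hb⟩, .inr ⟨ha, hc⟩]

theorem mk_eq_mk_iff {a b : Σ i, SCirc (f i)} :
    (Quot.mk _ a : WedgeSCirc m f) = Quot.mk _ b ↔ wedgeRel m f a b := by
  rw [Quot.eq, wedgeRel_equivalence.eqvGen_iff]

theorem mk_eq_basePt_iff {i₀ : Fin m} {a₀ : SCirc (f i₀)} (h₀ : IsBasePt a₀) {i : Fin m}
    {a : SCirc (f i)} :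
    (Quot.mk _ ⟨i, a⟩ : WedgeSCirc m f) = Quot.mk _ ⟨i₀, a₀⟩ ↔ IsBasePt a := by
  rw [mk_eq_mk_iff]
  refine ⟨?_, fun ha => .inr ⟨ha, h₀⟩⟩
  rintro (h | ⟨ha, -⟩)
  · cases h
    exact h₀
  · exact ha

theorem mk_mem_compl_basePt_iff {i₀ : Fin m} {a₀ : SCirc (f i₀)} (h₀ : IsBasePt a₀) {i : Fin m}
    {a : SCirc (f i)} :
    (Quot.mk _ ⟨i, a⟩ : WedgeSCirc m f) ∈ ({Quot.mk _ ⟨i₀, a₀⟩}ᶜ : Set (WedgeSCirc m f)) ↔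
      ¬IsBasePt a :=
  (mk_eq_basePt_iff h₀).not

theorem isOpen_iff {U : Set (WedgeSCirc m f)} :
    IsOpen U ↔ ∀ i (a b : SCirc (f i)), SCirc.le b a →
      (Quot.mk _ ⟨i, a⟩ : WedgeSCirc m f) ∈ U → (Quot.mk _ ⟨i, b⟩ : WedgeSCirc m f) ∈ U := by
  rw [← isQuotientMap_quot_mk.isOpen_preimage, isOpen_sigma_iff]
  exact forall_congr' fun i => ⟨fun h a b hba ha => h a ha b hba, fun h a ha b hba => h a b hba ha⟩

theorem mk_specializes_mk {i : Fin m} {a b : SCirc (f i)} (h : SCirc.le b a) :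
    (Quot.mk _ ⟨i, b⟩ : WedgeSCirc m f) ⤳ Quot.mk _ ⟨i, a⟩ :=
  specializes_iff_forall_open.2 fun _ hU ha => isOpen_iff.1 hU i a b h ha

theorem isOpen_compl_basePt {i₀ : Fin m} {a₀ : SCirc (f i₀)} (h₀ : IsBasePt a₀) :
    IsOpen ({Quot.mk _ ⟨i₀, a₀⟩}ᶜ : Set (WedgeSCirc m f)) := by
  refine isOpen_iff.2 fun i a b h ha => ?_
  rw [mk_mem_compl_basePt_iff h₀] at ha ⊢
  exact SCirc.not_isBasePt_of_le ha h

noncomputable def truncate (c : ℕ) : WedgeSCirc m f → WedgeSCirc m f :=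
  Quot.lift (fun a => Quot.mk _ ⟨a.1, SCirc.truncate c a.2⟩) <| by
    rintro a b (rfl | ⟨ha, hb⟩)
    · rfl
    · exact Quot.sound <| .inr
        ⟨by rwa [SCirc.truncate_of_isBasePt c ha], by rwa [SCirc.truncate_of_isBasePt c hb]⟩

theorem continuousOn_truncate {i₀ : Fin m} {a₀ : SCirc (f i₀)} (h₀ : IsBasePt a₀) (c : ℕ) :
    ContinuousOn (truncate c) ({Quot.mk _ ⟨i₀, a₀⟩}ᶜ : Set (WedgeSCirc m f)) := by
  refine (continuousOn_open_iff (isOpen_compl_basePt h₀)).2 fun U hU => isOpen_iff.2 ?_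
  rintro i a b h ⟨hne, ha⟩
  rw [mk_mem_compl_basePt_iff h₀] at hne
  exact ⟨(mk_mem_compl_basePt_iff h₀).2 (SCirc.not_isBasePt_of_le hne h),
    isOpen_iff.1 hU i _ _ (SCirc.truncate_le_truncate_of_le hne h c) ha⟩

theorem nullhomotopic_val_compl_basePt {i₀ : Fin m} {a₀ : SCirc (f i₀)} (h₀ : IsBasePt a₀) :
    (⟨Subtype.val, continuous_subtype_val⟩ :
      C(({Quot.mk _ ⟨i₀, a₀⟩}ᶜ : Set (WedgeSCirc m f)), WedgeSCirc m f)).Nullhomotopic := by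
  set p : WedgeSCirc m f := Quot.mk _ ⟨i₀, a₀⟩
  let g (c : ℕ) : C(({p}ᶜ : Set (WedgeSCirc m f)), WedgeSCirc m f) :=
    ⟨_, (continuousOn_truncate h₀ c).domRestrict⟩
  have hstep (c : ℕ) : (∀ q, g c q ⤳ g (c + 1) q) ∨ ∀ q, g (c + 1) q ⤳ g c q := by
    rcases Nat.mod_two_eq_zero_or_one c with hc | hc
    · refine .inl ?_
      rintro ⟨⟨⟨i, a⟩⟩, ha⟩
      exact mk_specializes_mk
        (SCirc.truncate_le_truncate_succ hc ((mk_mem_compl_basePt_iff h₀).1 ha))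
    · refine .inr ?_
      rintro ⟨⟨⟨i, a⟩⟩, ha⟩
      exact mk_specializes_mk
        (SCirc.truncate_succ_le_truncate hc ((mk_mem_compl_basePt_iff h₀).1 ha))
  obtain ⟨K, hK⟩ := Finite.exists_le fun i => 2 * f i - 2
  have hgK : g K = ⟨Subtype.val, continuous_subtype_val⟩ := by
    ext ⟨⟨⟨i, a⟩⟩, _⟩
    exact congrArg (fun b => Quot.mk (wedgeRel m f) ⟨i, b⟩) (SCirc.truncate_of_le (hK i) a)
  have hg0 (q : ({p}ᶜ : Set (WedgeSCirc m f))) : g 0 q ⤳ p := by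
    obtain ⟨⟨⟨i, a⟩⟩, ha⟩ := q
    exact (mk_specializes_mk (SCirc.truncate_zero_le ((mk_mem_compl_basePt_iff h₀).1 ha))).trans
      (.of_eq ((mk_eq_basePt_iff h₀).2 ⟨⟨0, a.pos⟩, rfl, rfl⟩))
  exact ⟨p, hgK ▸ (ContinuousMap.Homotopic.of_specializes_chain hstep K).symm.trans
    (.of_specializes hg0)⟩

end WedgeSCirc

/-- Let `⋁_{i=1}^m 𝕊¹_{n_i}`, with each `n_i ≥ 2`, be the wedge of
`m` finite models of the circle, formed by identifying the points `y_0` of all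
factors to a single point `y_0`.  Then `cat(⋁_{i=1}^m 𝕊¹_{n_i}) ≤ 2`; explicitly,
the minimal open neighbourhood `Q₁` of the wedge point `y_0` and the complement `Q₂`
of `{y_0}` form an open cover by two sets whose inclusions are nullhomotopic. -/
theorem lsCat_wedge_scirc_le_two (m : ℕ) (hm : 0 < m) (f : Fin m → ℕ)
    (hf : ∀ i, 2 ≤ f i) :
    let p : WedgeSCirc m f :=
      Quot.mk _ ⟨⟨0, hm⟩, SCirc.y ⟨0, by have := hf ⟨0, hm⟩; omega⟩⟩
    let Q₁ : Set (WedgeSCirc m f) := ⋂₀ {U | IsOpen U ∧ p ∈ U}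
    let Q₂ : Set (WedgeSCirc m f) := {p}ᶜ
    (IsOpen Q₁ ∧ IsOpen Q₂ ∧ Q₁ ∪ Q₂ = Set.univ ∧
      ContinuousMap.Nullhomotopic
        (⟨Subtype.val, continuous_subtype_val⟩ : C(Q₁, WedgeSCirc m f)) ∧
      ContinuousMap.Nullhomotopic
        (⟨Subtype.val, continuous_subtype_val⟩ : C(Q₂, WedgeSCirc m f))) ∧
    lsCat (WedgeSCirc m f) ≤ 2 := by
  intro p Q₁ Q₂
  have h₀ : IsBasePt (SCirc.y (⟨0, by have := hf ⟨0, hm⟩; omega⟩ : Fin (f ⟨0, hm⟩))) :=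
    ⟨_, rfl, rfl⟩
  have hQ₁ : Q₁ = nhdsKer {p} := by simp [Q₁, nhdsKer_def]
  have hopen₁ : IsOpen Q₁ := hQ₁ ▸ isOpen_nhdsKer
  have hopen₂ : IsOpen Q₂ := WedgeSCirc.isOpen_compl_basePt h₀
  have hp : p ∈ Q₁ := by rw [hQ₁]; exact subset_nhdsKer rfl
  have hcover : Q₁ ∪ Q₂ = univ :=
    eq_univ_of_forall fun z => (eq_or_ne z p).imp (fun h : z = p => h ▸ hp) id
  have hnull₁ : (⟨Subtype.val, continuous_subtype_val⟩ : C(Q₁, WedgeSCirc m f)).Nullhomotopic :=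
    ⟨p, .of_specializes fun q => mem_nhdsKer_singleton.1 (hQ₁ ▸ q.2)⟩
  have hnull₂ := WedgeSCirc.nullhomotopic_val_compl_basePt h₀
  exact ⟨⟨hopen₁, hopen₂, hcover, hnull₁, hnull₂⟩,
    Nat.sInf_le (catCover_two hopen₁ hopen₂ hcover hnull₁ hnull₂)⟩
end
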